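/- arXiv:1106.1513 — 6 statements merged into one kernel-verified Lean document; each statement's English description precedes it below -/
import Mathlib

section
/- For any positive real numbers β, γ > 0, the infinite matrix with entries a_{ij} = i^{β−1/2} j^{γ−1/2} / (i+j)^{β+γ} (for integers i, j ≥ 1) represents a bounded linear operator on ℓ²; equivalently, sup over n ≥ 1 of the operator norm on ℓ²_n of the truncated matrix [a_{ij}]_{1 ≤ i,j ≤ n} is finite. -/
open Finset in
lemma my_schur (n : ℕ) (M : Matrix (Fin n) (Fin n) ℂ) (w : Fin n → ℝ) (hw : ∀ i, 0 < w i)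
    (α : ℝ) (hα : 0 ≤ α)
    (hrow : ∀ i, ∑ j, ‖M i j‖ * w j ≤ α * w i)
    (hcol : ∀ j, ∑ i, ‖M i j‖ * w i ≤ α * w j) :
    ‖Matrix.toEuclideanCLM (𝕜 := ℂ) M‖ ≤ α := by
  apply ContinuousLinearMap.opNorm_le_bound _ hα
  intro x
  have hx : 0 ≤ ‖x‖ := norm_nonneg x
  have key : ‖Matrix.toEuclideanCLM (𝕜 := ℂ) M x‖ ^ 2 ≤ (α * ‖x‖) ^ 2 := by
    have happ : ∀ i, (Matrix.toEuclideanCLM (𝕜 := ℂ) M x) i = ∑ j, M i j * x j := by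
      intro i; rfl
    rw [EuclideanSpace.norm_eq, Real.sq_sqrt (by positivity)]
    have step1 : ∀ i, ‖(Matrix.toEuclideanCLM (𝕜 := ℂ) M x) i‖ ^ 2
        ≤ (α * w i) * ∑ j, (‖M i j‖ / w j) * ‖x j‖ ^ 2 := by
      intro i
      have h1 : ‖(Matrix.toEuclideanCLM (𝕜 := ℂ) M x) i‖ ≤ ∑ j, ‖M i j‖ * ‖x j‖ := by
        rw [happ i]
        refine (norm_sum_le _ _).trans ?_
        refine Finset.sum_le_sum fun j _ => ?_
        rw [norm_mul]
      have h2 : (∑ j, ‖M i j‖ * ‖x j‖) ^ 2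
          ≤ (∑ j, ‖M i j‖ * w j) * ∑ j, (‖M i j‖ / w j) * ‖x j‖ ^ 2 := by
        apply Finset.sum_sq_le_sum_mul_sum_of_sq_eq_mul
        · exact fun j _ => mul_nonneg (norm_nonneg _) (hw j).le
        · exact fun j _ => mul_nonneg (div_nonneg (norm_nonneg _) (hw j).le) (sq_nonneg _)
        · intro j _
          have := (hw j).ne'
          field_simp
      calc ‖(Matrix.toEuclideanCLM (𝕜 := ℂ) M x) i‖ ^ 2
          ≤ (∑ j, ‖M i j‖ * ‖x j‖) ^ 2 := pow_le_pow_left₀ (norm_nonneg _) h1 2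
        _ ≤ (∑ j, ‖M i j‖ * w j) * ∑ j, (‖M i j‖ / w j) * ‖x j‖ ^ 2 := h2
        _ ≤ (α * w i) * ∑ j, (‖M i j‖ / w j) * ‖x j‖ ^ 2 := by
            apply mul_le_mul_of_nonneg_right (hrow i)
            exact Finset.sum_nonneg fun j _ =>
              mul_nonneg (div_nonneg (norm_nonneg _) (hw j).le) (sq_nonneg _)
    calc ∑ i, ‖(Matrix.toEuclideanCLM (𝕜 := ℂ) M x) i‖ ^ 2
        ≤ ∑ i, (α * w i) * ∑ j, (‖M i j‖ / w j) * ‖x j‖ ^ 2 :=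
          Finset.sum_le_sum fun i _ => step1 i
      _ = ∑ j, ∑ i, α * ((‖x j‖ ^ 2 / w j) * (‖M i j‖ * w i)) := by
          rw [Finset.sum_comm]
          refine Finset.sum_congr rfl fun i _ => ?_
          rw [Finset.mul_sum]
          refine Finset.sum_congr rfl fun j _ => ?_
          ring
      _ = α * ∑ j, (‖x j‖ ^ 2 / w j) * ∑ i, ‖M i j‖ * w i := by
          rw [Finset.mul_sum]
          refine Finset.sum_congr rfl fun j _ => ?_
          rw [Finset.mul_sum, Finset.mul_sum]
      _ ≤ α * ∑ j, (‖x j‖ ^ 2 / w j) * (α * w j) := by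
          refine mul_le_mul_of_nonneg_left (Finset.sum_le_sum fun j _ => ?_) hα
          exact mul_le_mul_of_nonneg_left (hcol j)
            (div_nonneg (sq_nonneg _) (hw j).le)
      _ = α ^ 2 * ∑ j, ‖x j‖ ^ 2 := by
          rw [Finset.mul_sum, Finset.mul_sum]
          refine Finset.sum_congr rfl fun j _ => ?_
          have := (hw j).ne'
          field_simp
      _ = (α * ‖x‖) ^ 2 := by
          rw [EuclideanSpace.norm_eq, mul_pow, Real.sq_sqrt (by positivity)]
  calc ‖Matrix.toEuclideanCLM (𝕜 := ℂ) M x‖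
      = Real.sqrt (‖Matrix.toEuclideanCLM (𝕜 := ℂ) M x‖ ^ 2) := (Real.sqrt_sq (norm_nonneg _)).symm
    _ ≤ Real.sqrt ((α * ‖x‖) ^ 2) := Real.sqrt_le_sqrt key
    _ = α * ‖x‖ := Real.sqrt_sq (by positivity)


lemma my_tele_le {γ : ℝ} (hγ0 : 0 < γ) (hγ1 : γ ≤ 1) {m : ℝ} (hm : 1 ≤ m) :
    γ * m ^ (γ - 1) ≤ m ^ γ - (m - 1) ^ γ := by
  have hm0 : (0:ℝ) < m := lt_of_lt_of_le one_pos hm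
  have hs : (-1:ℝ) ≤ -1/m := by
    rw [neg_div, neg_le_neg_iff]
    exact (div_le_one hm0).2 hm
  have hb := rpow_one_add_le_one_add_mul_self hs hγ0.le hγ1
  have hfact : m - 1 = m * (1 + (-1/m)) := by field_simp; ring
  have h1 : (m - 1) ^ γ = m ^ γ * (1 + (-1/m)) ^ γ := by
    rw [hfact, Real.mul_rpow hm0.le (by nlinarith [(div_le_one hm0).2 hm])]
  have hmγ : (0:ℝ) ≤ m ^ γ := (Real.rpow_pos_of_pos hm0 γ).le
  have h2 : (m - 1) ^ γ ≤ m ^ γ * (1 + γ * (-1/m)) := by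
    rw [h1]; exact mul_le_mul_of_nonneg_left hb hmγ
  have h3 : m ^ γ * (1 + γ * (-1/m)) = m ^ γ - γ * m ^ (γ - 1) := by
    rw [Real.rpow_sub hm0, Real.rpow_one]
    field_simp [hm0.ne']
    ring
  rw [h3] at h2
  linarith

lemma my_tele_neg {β : ℝ} (hβ : 0 < β) {m : ℝ} (hm : 2 ≤ m) :
    β * m ^ (-β - 1) ≤ (m - 1) ^ (-β) - m ^ (-β) := by
  have hm0 : (0:ℝ) < m := by linarith
  have hm1 : (0:ℝ) < m - 1 := by linarith
  have hmb : (0:ℝ) < m ^ β := Real.rpow_pos_of_pos hm0 β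
  have hm1b : (0:ℝ) < (m - 1) ^ β := Real.rpow_pos_of_pos hm1 β
  have e1 : (m - 1) ^ (-β) = ((m-1) ^ β)⁻¹ := by rw [Real.rpow_neg hm1.le]
  have e2 : m ^ (-β) = (m ^ β)⁻¹ := by rw [Real.rpow_neg hm0.le]
  have e3 : m ^ (-β - 1) = (m ^ β)⁻¹ * m⁻¹ := by
    rw [show -β - 1 = -β + (-1) by ring, Real.rpow_add hm0, Real.rpow_neg_one,
      Real.rpow_neg hm0.le]
  have e4 : m ^ (β - 1) = m ^ β * m⁻¹ := by
    rw [Real.rpow_sub hm0, Real.rpow_one, div_eq_mul_inv]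
  rcases le_total β 1 with hβ1 | hβ1
  · have h := my_tele_le hβ hβ1 (by linarith : (1:ℝ) ≤ m)
    have hcmp : (m - 1) ^ β ≤ m ^ β :=
      Real.rpow_le_rpow hm1.le (by linarith) hβ.le
    have hmul : β * m ^ (β - 1) * ((m^β)⁻¹ * ((m-1)^β)⁻¹)
        ≤ (m ^ β - (m - 1) ^ β) * ((m^β)⁻¹ * ((m-1)^β)⁻¹) :=
      mul_le_mul_of_nonneg_right h (by positivity)
    rw [e1, e2, e3]
    calc β * ((m ^ β)⁻¹ * m⁻¹) ≤ β * (((m-1) ^ β)⁻¹ * m⁻¹) := by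
          apply mul_le_mul_of_nonneg_left _ hβ.le
          apply mul_le_mul_of_nonneg_right _ (by positivity)
          exact inv_anti₀ hm1b hcmp
      _ = β * m ^ (β - 1) * ((m^β)⁻¹ * ((m-1)^β)⁻¹) := by
          rw [e4]
          field_simp [hmb.ne', hm1b.ne', hm0.ne']
      _ ≤ (m ^ β - (m - 1) ^ β) * ((m^β)⁻¹ * ((m-1)^β)⁻¹) := hmul
      _ = ((m-1) ^ β)⁻¹ - (m ^ β)⁻¹ := by
          rw [sub_mul, ← mul_assoc, mul_inv_cancel₀ hmb.ne', one_mul,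
            mul_comm ((m^β)⁻¹) _, ← mul_assoc, mul_inv_cancel₀ hm1b.ne', one_mul]
  · have hge : (0:ℝ) ≤ 1/(m-1) := by positivity
    have hb := one_add_mul_self_le_rpow_one_add (by linarith : (-1:ℝ) ≤ 1/(m-1)) hβ1
    have hfact : (1:ℝ) + 1/(m-1) = m / (m-1) := by field_simp; ring
    have h1 : (1 + 1/(m-1)) ^ β = m ^ β * ((m-1) ^ β)⁻¹ := by
      rw [hfact, Real.div_rpow hm0.le hm1.le, div_eq_mul_inv]
    have h2 : 1 + β * (1/m) ≤ 1 + β * (1/(m-1)) := by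
      have h : 1/m ≤ 1/(m-1) := by
        apply one_div_le_one_div_of_le hm1; linarith
      nlinarith
    have h3 : 1 + β * (1/m) ≤ m ^ β * ((m-1) ^ β)⁻¹ := by
      rw [← h1]; exact le_trans h2 hb
    rw [e1, e2, e3]
    have h4 := mul_le_mul_of_nonneg_right h3 (le_of_lt (inv_pos.2 hmb))
    calc β * ((m ^ β)⁻¹ * m⁻¹) = (1 + β * (1/m)) * (m ^ β)⁻¹ - (m ^ β)⁻¹ := by
          field_simp
          ring
      _ ≤ m ^ β * ((m-1) ^ β)⁻¹ * (m ^ β)⁻¹ - (m ^ β)⁻¹ := by linarith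
      _ = ((m-1) ^ β)⁻¹ - (m ^ β)⁻¹ := by
          rw [mul_comm ((m:ℝ)^β) _, mul_assoc, mul_inv_cancel₀ hmb.ne', mul_one]

lemma my_sum_head {γ : ℝ} (hγ : 0 < γ) (k : ℕ) :
    ∑ j ∈ Finset.range k, ((j:ℝ)+1) ^ (γ-1) ≤ max 1 (1/γ) * (k:ℝ) ^ γ := by
  rcases Nat.eq_zero_or_pos k with rfl | hk
  · simp [Real.zero_rpow hγ.ne']
  have hk0 : (0:ℝ) < k := by exact_mod_cast hk
  rcases le_total γ 1 with h1 | h1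
  · have key : ∀ k : ℕ, γ * ∑ j ∈ Finset.range k, ((j:ℝ)+1) ^ (γ-1) ≤ (k:ℝ) ^ γ := by
      intro k
      induction k with
      | zero => simp [Real.zero_rpow hγ.ne']
      | succ k ih =>
        rw [Finset.sum_range_succ, mul_add]
        have ht := my_tele_le hγ h1 (by push_cast; linarith [Nat.cast_nonneg (α := ℝ) k] :
          (1:ℝ) ≤ (k:ℝ)+1)
        have hsimp : ((k:ℝ) + 1 - 1) = (k:ℝ) := by ring
        rw [hsimp] at ht
        push_cast
        linarith
    have h2 : ∑ j ∈ Finset.range k, ((j:ℝ)+1) ^ (γ-1) ≤ (1/γ) * (k:ℝ) ^ γ := by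
      rw [div_mul_eq_mul_div, le_div_iff₀ hγ]
      linarith [key k]
    exact h2.trans (mul_le_mul_of_nonneg_right (le_max_right _ _)
      (Real.rpow_nonneg (Nat.cast_nonneg k) γ))
  · have h2 : ∑ j ∈ Finset.range k, ((j:ℝ)+1) ^ (γ-1) ≤ (k:ℝ) * (k:ℝ) ^ (γ-1) := by
      calc ∑ j ∈ Finset.range k, ((j:ℝ)+1) ^ (γ-1)
          ≤ ∑ _j ∈ Finset.range k, (k:ℝ) ^ (γ-1) := by
            refine Finset.sum_le_sum fun j hj => ?_
            apply Real.rpow_le_rpow (by positivity) _ (by linarith)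
            have := Finset.mem_range.mp hj
            have : (j:ℝ) + 1 ≤ (k:ℝ) := by exact_mod_cast Nat.succ_le_of_lt this
            linarith
        _ = (k:ℝ) * (k:ℝ) ^ (γ-1) := by
            rw [Finset.sum_const, Finset.card_range, nsmul_eq_mul]
    have h3 : (k:ℝ) * (k:ℝ) ^ (γ-1) = (k:ℝ) ^ γ := by
      rw [Real.rpow_sub hk0, Real.rpow_one]; field_simp
    rw [h3] at h2
    refine h2.trans ?_
    nlinarith [Real.rpow_nonneg (le_of_lt hk0) γ, le_max_left (1:ℝ) (1/γ)]

lemma my_sum_tail {β : ℝ} (hβ : 0 < β) (i : ℕ) (hi : 1 ≤ i) (n : ℕ) :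
    ∑ j ∈ Finset.Ico i n, ((j:ℝ)+1) ^ (-β-1) ≤ (i:ℝ) ^ (-β) / β := by
  have key : ∀ n : ℕ, i ≤ n →
      β * ∑ j ∈ Finset.Ico i n, ((j:ℝ)+1) ^ (-β-1) ≤ (i:ℝ) ^ (-β) - (n:ℝ) ^ (-β) := by
    intro n hn
    induction n with
    | zero => omega
    | succ n ih =>
      rcases Nat.lt_or_ge i (n+1) with h | h
      · have hin : i ≤ n := by omega
        rw [Finset.sum_Ico_succ_top hin, mul_add]
        have hn1 : (1:ℝ) ≤ (n:ℝ) := by exact_mod_cast le_trans hi hin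
        have ht := my_tele_neg hβ (show (2:ℝ) ≤ (n:ℝ)+1 by linarith)
        have hsimp : ((n:ℝ) + 1 - 1) = (n:ℝ) := by ring
        rw [hsimp] at ht
        have h5 := ih hin
        push_cast
        linarith
      · have : i = n+1 := by omega
        subst this
        rw [Finset.Ico_self]
        simp
  rcases Nat.lt_or_ge n i with h | h
  · rw [Finset.Ico_eq_empty (by omega), Finset.sum_empty]
    positivity
  · have h5 := key n h
    have hn0 : (0:ℝ) ≤ (n:ℝ) ^ (-β) := Real.rpow_nonneg (Nat.cast_nonneg n) _
    rw [le_div_iff₀ hβ]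
    linarith

lemma my_row_est {β γ : ℝ} (hβ : 0 < β) (hγ : 0 < γ) (n i : ℕ) (hi : 1 ≤ i) :
    ∑ j ∈ Finset.range n, ((j:ℝ)+1) ^ (γ-1) / ((i:ℝ) + ((j:ℝ)+1)) ^ (β+γ)
      ≤ (max 1 (1/γ) + 1/β) * (i:ℝ) ^ (-β) := by
  have hi0 : (0:ℝ) < i := by exact_mod_cast hi
  rw [← Finset.sum_filter_add_sum_filter_not (Finset.range n) (· < i)]
  have hpart1 : ∑ j ∈ (Finset.range n).filter (· < i),
      ((j:ℝ)+1) ^ (γ-1) / ((i:ℝ) + ((j:ℝ)+1)) ^ (β+γ)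
      ≤ max 1 (1/γ) * (i:ℝ) ^ (-β) := by
    have step : ∑ j ∈ (Finset.range n).filter (· < i),
        ((j:ℝ)+1) ^ (γ-1) / ((i:ℝ) + ((j:ℝ)+1)) ^ (β+γ)
        ≤ ∑ j ∈ Finset.range i, ((j:ℝ)+1) ^ (γ-1) / (i:ℝ) ^ (β+γ) := by
      calc ∑ j ∈ (Finset.range n).filter (· < i),
          ((j:ℝ)+1) ^ (γ-1) / ((i:ℝ) + ((j:ℝ)+1)) ^ (β+γ)
          ≤ ∑ j ∈ (Finset.range n).filter (· < i), ((j:ℝ)+1) ^ (γ-1) / (i:ℝ) ^ (β+γ) := by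
            refine Finset.sum_le_sum fun j _ => ?_
            gcongr
            all_goals try positivity
            all_goals nlinarith [Nat.cast_nonneg (α := ℝ) j]
        _ ≤ ∑ j ∈ Finset.range i, ((j:ℝ)+1) ^ (γ-1) / (i:ℝ) ^ (β+γ) := by
            apply Finset.sum_le_sum_of_subset_of_nonneg
            · intro j hj
              simp only [Finset.mem_filter, Finset.mem_range] at hj ⊢
              exact hj.2
            · intro j _ _
              positivity
    refine step.trans ?_
    rw [← Finset.sum_div]
    rw [div_le_iff₀ (Real.rpow_pos_of_pos hi0 _)]
    calc ∑ j ∈ Finset.range i, ((j:ℝ)+1) ^ (γ-1) ≤ max 1 (1/γ) * (i:ℝ) ^ γ := my_sum_head hγ i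
      _ = max 1 (1/γ) * (i:ℝ) ^ (-β) * (i:ℝ) ^ (β+γ) := by
          rw [mul_assoc, ← Real.rpow_add hi0]
          norm_num
  have hpart2 : ∑ j ∈ (Finset.range n).filter (fun j => ¬ j < i),
      ((j:ℝ)+1) ^ (γ-1) / ((i:ℝ) + ((j:ℝ)+1)) ^ (β+γ)
      ≤ (1/β) * (i:ℝ) ^ (-β) := by
    have hset : (Finset.range n).filter (fun j => ¬ j < i) = Finset.Ico i n := by
      ext j
      simp only [Finset.mem_filter, Finset.mem_range, Finset.mem_Ico, not_lt]
      omega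
    rw [hset]
    calc ∑ j ∈ Finset.Ico i n, ((j:ℝ)+1) ^ (γ-1) / ((i:ℝ) + ((j:ℝ)+1)) ^ (β+γ)
        ≤ ∑ j ∈ Finset.Ico i n, ((j:ℝ)+1) ^ (-β-1) := by
          refine Finset.sum_le_sum fun j _ => ?_
          have hj1 : (0:ℝ) < (j:ℝ)+1 := by positivity
          have hd : ((j:ℝ)+1) ^ (β+γ) ≤ ((i:ℝ) + ((j:ℝ)+1)) ^ (β+γ) :=
            Real.rpow_le_rpow hj1.le (by linarith) (by positivity)
          calc ((j:ℝ)+1) ^ (γ-1) / ((i:ℝ) + ((j:ℝ)+1)) ^ (β+γ)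
              ≤ ((j:ℝ)+1) ^ (γ-1) / ((j:ℝ)+1) ^ (β+γ) := by
                gcongr
                all_goals try positivity
                all_goals nlinarith [Nat.cast_nonneg (α := ℝ) i]
            _ = ((j:ℝ)+1) ^ (-β-1) := by
                rw [← Real.rpow_sub hj1]
                congr 1
                ring
      _ ≤ (i:ℝ) ^ (-β) / β := my_sum_tail hβ i hi n
      _ = (1/β) * (i:ℝ) ^ (-β) := by ring
  calc _ ≤ max 1 (1/γ) * (i:ℝ) ^ (-β) + (1/β) * (i:ℝ) ^ (-β) := add_le_add hpart1 hpart2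
    _ = (max 1 (1/γ) + 1/β) * (i:ℝ) ^ (-β) := by ring

/-- Weighted row sum bound. -/
lemma my_weighted_row {β γ : ℝ} (hβ : 0 < β) (hγ : 0 < γ) (n i : ℕ) (hi : 1 ≤ i) :
    ∑ j ∈ Finset.range n,
      ((i:ℝ) ^ (β - 1/2) * ((j:ℝ)+1) ^ (γ - 1/2) / ((i:ℝ) + ((j:ℝ)+1)) ^ (β+γ))
        * ((j:ℝ)+1) ^ (-(1/2):ℝ)
      ≤ (max 1 (1/γ) + 1/β) * (i:ℝ) ^ (-(1/2):ℝ) := by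
  have hi0 : (0:ℝ) < i := by exact_mod_cast hi
  have hsum : ∀ j : ℕ,
      ((i:ℝ) ^ (β - 1/2) * ((j:ℝ)+1) ^ (γ - 1/2) / ((i:ℝ) + ((j:ℝ)+1)) ^ (β+γ))
        * ((j:ℝ)+1) ^ (-(1/2):ℝ)
      = (i:ℝ) ^ (β - 1/2) * (((j:ℝ)+1) ^ (γ-1) / ((i:ℝ) + ((j:ℝ)+1)) ^ (β+γ)) := by
    intro j
    have hj1 : (0:ℝ) < (j:ℝ)+1 := by positivity
    rw [div_mul_eq_mul_div, mul_assoc, ← Real.rpow_add hj1]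
    rw [show γ - 1/2 + (-(1/2):ℝ) = γ - 1 by ring]
    ring
  simp_rw [hsum]
  rw [← Finset.mul_sum]
  have h1 := my_row_est hβ hγ n i hi
  have h2 : (i:ℝ) ^ (β - 1/2) * ((max 1 (1/γ) + 1/β) * (i:ℝ) ^ (-β))
      = (max 1 (1/γ) + 1/β) * (i:ℝ) ^ (-(1/2):ℝ) := by
    rw [mul_comm ((i:ℝ) ^ (β - 1/2)) _, mul_assoc, ← Real.rpow_add hi0,
      show (-β + (β - 1/2) : ℝ) = -(1/2) by ring]
  calc (i:ℝ) ^ (β - 1/2) * ∑ j ∈ Finset.range n,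
        ((j:ℝ)+1) ^ (γ-1) / ((i:ℝ) + ((j:ℝ)+1)) ^ (β+γ)
      ≤ (i:ℝ) ^ (β - 1/2) * ((max 1 (1/γ) + 1/β) * (i:ℝ) ^ (-β)) :=
        mul_le_mul_of_nonneg_left h1 (Real.rpow_nonneg hi0.le _)
    _ = (max 1 (1/γ) + 1/β) * (i:ℝ) ^ (-(1/2):ℝ) := h2


/-- for positive reals `β, γ > 0`, the matrix with entries
`a_{ij} = i^{β-1/2} j^{γ-1/2} / (i+j)^{β+γ}` (`i, j ≥ 1`) represents a bounded operator
on `ℓ²`: the operator norms on `ℓ²_n` of its finite truncations are uniformly bounded. -/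
theorem stmt_0 (β γ : ℝ) (hβ : 0 < β) (hγ : 0 < γ) :
    ∃ C : ℝ, ∀ n : ℕ,
      ‖Matrix.toEuclideanCLM (𝕜 := ℂ)
          (Matrix.of fun i j : Fin n =>
            ((((i : ℝ) + 1) ^ (β - 1 / 2) * ((j : ℝ) + 1) ^ (γ - 1 / 2) /
                (((i : ℝ) + 1) + ((j : ℝ) + 1)) ^ (β + γ) : ℝ) : ℂ))‖ ≤ C := by
  set Kr : ℝ := max 1 (1/γ) + 1/β with hKr
  set Kc : ℝ := max 1 (1/β) + 1/γ with hKc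
  have hKr0 : 0 ≤ Kr := by
    have := le_max_left (1:ℝ) (1/γ); rw [hKr]; positivity
  have hKc0 : 0 ≤ Kc := by
    have := le_max_left (1:ℝ) (1/β); rw [hKc]; positivity
  refine ⟨Kr + Kc, fun n => ?_⟩
  set M : Matrix (Fin n) (Fin n) ℂ := Matrix.of fun i j : Fin n =>
            ((((i : ℝ) + 1) ^ (β - 1 / 2) * ((j : ℝ) + 1) ^ (γ - 1 / 2) /
                (((i : ℝ) + 1) + ((j : ℝ) + 1)) ^ (β + γ) : ℝ) : ℂ) with hM
  have hnorm : ∀ i j : Fin n, ‖M i j‖ =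
      ((i : ℝ) + 1) ^ (β - 1 / 2) * ((j : ℝ) + 1) ^ (γ - 1 / 2) /
        (((i : ℝ) + 1) + ((j : ℝ) + 1)) ^ (β + γ) := by
    intro i j
    rw [hM]
    simp only [Matrix.of_apply]
    rw [Complex.norm_real]
    exact abs_of_nonneg (by positivity)
  apply my_schur n M (fun i => ((i:ℝ)+1) ^ (-(1/2):ℝ))
    (fun i => Real.rpow_pos_of_pos (by positivity) _) (Kr + Kc) (by linarith)
  · -- rows
    intro i
    set c : ℝ := (i:ℝ) + 1 with hc
    have hcpos : (0:ℝ) < c := by rw [hc]; positivity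
    set f : ℕ → ℝ := fun j =>
      (c ^ (β - 1/2) * ((j:ℝ)+1) ^ (γ - 1/2) / (c + ((j:ℝ)+1)) ^ (β+γ))
        * ((j:ℝ)+1) ^ (-(1/2):ℝ) with hf
    have hterm : ∀ j : Fin n, ‖M i j‖ * (((j:ℝ)+1) ^ (-(1/2):ℝ)) = f (j:ℕ) := by
      intro j
      rw [hnorm i j, hf]
    have hkey := my_weighted_row hβ hγ n ((i:ℕ)+1) (by omega)
    have hcast : (((i:ℕ) + 1 : ℕ) : ℝ) = c := by rw [hc]; push_cast; ring
    rw [hcast] at hkey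
    calc ∑ j, ‖M i j‖ * (((j:ℝ)+1) ^ (-(1/2):ℝ))
        = ∑ j : Fin n, f (j:ℕ) := Finset.sum_congr rfl fun j _ => hterm j
      _ = ∑ j ∈ Finset.range n, f j := Fin.sum_univ_eq_sum_range f n
      _ ≤ (max 1 (1/γ) + 1/β) * c ^ (-(1/2):ℝ) := hkey
      _ ≤ (Kr + Kc) * c ^ (-(1/2):ℝ) := by
          apply mul_le_mul_of_nonneg_right _ (Real.rpow_nonneg hcpos.le _)
          rw [← hKr]; linarith
  · -- cols
    intro j
    set s : ℝ := (j:ℝ) + 1 with hs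
    have hspos : (0:ℝ) < s := by rw [hs]; positivity
    set g : ℕ → ℝ := fun k =>
      (s ^ (γ - 1/2) * ((k:ℝ)+1) ^ (β - 1/2) / (s + ((k:ℝ)+1)) ^ (γ+β))
        * ((k:ℝ)+1) ^ (-(1/2):ℝ) with hg
    have hterm : ∀ i : Fin n, ‖M i j‖ * (((i:ℝ)+1) ^ (-(1/2):ℝ)) = g (i:ℕ) := by
      intro i
      rw [hnorm i j, hg]
      simp only []
      rw [add_comm γ β, add_comm s ((i:ℝ)+1)]
      ring
    have hkey := my_weighted_row hγ hβ n ((j:ℕ)+1) (by omega)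
    have hcast : (((j:ℕ) + 1 : ℕ) : ℝ) = s := by rw [hs]; push_cast; ring
    rw [hcast] at hkey
    calc ∑ i, ‖M i j‖ * (((i:ℝ)+1) ^ (-(1/2):ℝ))
        = ∑ i : Fin n, g (i:ℕ) := Finset.sum_congr rfl fun i _ => hterm i
      _ = ∑ k ∈ Finset.range n, g k := Fin.sum_univ_eq_sum_range g n
      _ ≤ (max 1 (1/β) + 1/γ) * s ^ (-(1/2):ℝ) := hkey
      _ ≤ (Kr + Kc) * s ^ (-(1/2):ℝ) := by
          apply mul_le_mul_of_nonneg_right _ (Real.rpow_nonneg hspos.le _)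
          rw [← hKc]; linarith
end

section
/- For any matrix [c_{ij}] in M_n(ℂ), the following are equivalent: (i) ‖[c_{ij}]‖_reg ≤ 1; (ii) there exist matrices [a_{ij}] and [b_{ij}] in M_n(ℂ) such that c_{ij} = a_{ij} b_{ij} for all i, j = 1, …, n, and both sup_{1 ≤ i ≤ n} ∑_{j=1}^n |a_{ij}|² ≤ 1 and sup_{1 ≤ j ≤ n} ∑_{i=1}^n |b_{ij}|² ≤ 1 hold. -/
/-- The regular norm of a complex `n × n` matrix: the operator norm on `ℓ²_n` of the matrix
whose entries are the absolute values of the entries. -/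
noncomputable def regNorm {n : ℕ} (c : Matrix (Fin n) (Fin n) ℂ) : ℝ :=
  ‖Matrix.toEuclideanCLM (𝕜 := ℂ) (Matrix.of fun i j => (‖c i j‖ : ℂ))‖



lemma key1 {n : ℕ} (c : Matrix (Fin n) (Fin n) ℂ) (h : regNorm c ≤ 1) (x : Fin n → ℝ) :
    ∑ i, (∑ j, ‖c i j‖ * x j)^2 ≤ ∑ j, (x j)^2 := by
  set A : Matrix (Fin n) (Fin n) ℂ := Matrix.of fun i j => (‖c i j‖ : ℂ) with hA
  set X : EuclideanSpace ℂ (Fin n) := (WithLp.equiv 2 _).symm (fun j => (x j : ℂ)) with hX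
  have h1 : ‖Matrix.toEuclideanCLM (𝕜 := ℂ) A X‖ ≤ ‖X‖ := by
    calc ‖Matrix.toEuclideanCLM (𝕜 := ℂ) A X‖ ≤ regNorm c * ‖X‖ :=
          (Matrix.toEuclideanCLM (𝕜 := ℂ) A).le_opNorm X
    _ ≤ 1 * ‖X‖ := by gcongr
    _ = ‖X‖ := one_mul _
  rw [hX, WithLp.equiv_symm_apply, Matrix.toEuclideanCLM_toLp] at h1
  rw [EuclideanSpace.norm_eq, EuclideanSpace.norm_eq] at h1
  have hcoord : ∀ i, ((WithLp.equiv 2 ((Fin n) → ℂ)).symm (Matrix.toLin' A (fun j => (x j : ℂ)))) i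
      = ((∑ j, ‖c i j‖ * x j : ℝ) : ℂ) := by
    intro i
    simp only [WithLp.equiv_symm_apply, PiLp.toLp_apply, Matrix.toLin'_apply, Matrix.mulVec, dotProduct,
      hA, Matrix.of_apply]
    push_cast
    rfl
  have h2 : Real.sqrt (∑ i, (∑ j, ‖c i j‖ * x j)^2) ≤
      Real.sqrt (∑ j, (x j)^2) := by
    have e1 : ∑ i, (∑ j, ‖c i j‖ * x j)^2
        = ∑ i, ‖((WithLp.equiv 2 ((Fin n) → ℂ)).symm (Matrix.toLin' A (fun j => (x j : ℂ)))) i‖ ^ 2 :=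
      Finset.sum_congr rfl fun i _ => by rw [hcoord i, Complex.norm_real, Real.norm_eq_abs, sq_abs]
    have e2 : ∑ j, (x j)^2 = ∑ j, ‖X j‖ ^ 2 :=
      Finset.sum_congr rfl fun j _ => by
        simp only [hX, WithLp.equiv_symm_apply, PiLp.toLp_apply, Complex.norm_real, Real.norm_eq_abs, sq_abs]
    rw [e1, e2]; exact h1
  exact (Real.sqrt_le_sqrt_iff (Finset.sum_nonneg fun i _ => sq_nonneg _)).mp h2

lemma key2 {n : ℕ} (m : Fin n → Fin n → ℝ)
    (hM : ∀ x : Fin n → ℝ, ∑ i, (∑ j, m i j * x j)^2 ≤ ∑ j, (x j)^2)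
    (x : Fin n → ℝ) :
    ∑ j, (∑ i, m i j * x i)^2 ≤ ∑ i, (x i)^2 := by
  set y : Fin n → ℝ := fun j => ∑ i, m i j * x i with hy
  set S : ℝ := ∑ j, (y j)^2 with hS
  set A : ℝ := ∑ i, (x i)^2 with hA2
  have hSnn : 0 ≤ S := Finset.sum_nonneg fun j _ => sq_nonneg _
  have hAnn : 0 ≤ A := Finset.sum_nonneg fun i _ => sq_nonneg _
  have hswap : S = ∑ i, x i * (∑ j, m i j * y j) := by
    calc S = ∑ j, y j * ∑ i, m i j * x i := Finset.sum_congr rfl fun j _ => by rw [sq]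
    _ = ∑ j, ∑ i, x i * (m i j * y j) := Finset.sum_congr rfl fun j _ => by
          rw [Finset.mul_sum]; exact Finset.sum_congr rfl fun i _ => by ring
    _ = ∑ i, ∑ j, x i * (m i j * y j) := Finset.sum_comm
    _ = ∑ i, x i * (∑ j, m i j * y j) :=
          Finset.sum_congr rfl fun i _ => (Finset.mul_sum _ _ _).symm
  have hCS : S^2 ≤ A * S := by
    calc S^2 = (∑ i, x i * (∑ j, m i j * y j))^2 := by rw [hswap]
    _ ≤ A * (∑ i, (∑ j, m i j * y j)^2) :=
        Finset.sum_mul_sq_le_sq_mul_sq Finset.univ x (fun i => ∑ j, m i j * y j)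
    _ ≤ A * S := by
        have := hM y
        exact mul_le_mul_of_nonneg_left this hAnn
  nlinarith [hSnn, hAnn, hCS]

section
variable {n : ℕ}

lemma factor_lt (c : Matrix (Fin n) (Fin n) ℂ)
    (hM : ∀ x : Fin n → ℝ, ∑ i, (∑ j, ‖c i j‖ * x j)^2 ≤ ∑ j, (x j)^2)
    (hMT : ∀ x : Fin n → ℝ, ∑ j, (∑ i, ‖c i j‖ * x i)^2 ≤ ∑ i, (x i)^2)
    (r : ℝ) (hr0 : 0 < r) (hr1 : r < 1) :
    ∃ a b : Fin n → Fin n → ℂ,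
      (∀ i j, (r : ℂ) * c i j = a i j * b i j) ∧
      (∀ i, ∑ j, ‖a i j‖ ^ 2 ≤ 1) ∧
      (∀ j, ∑ i, ‖b i j‖ ^ 2 ≤ 1) := by
  set m : Fin n → Fin n → ℝ := fun i j => ‖c i j‖ with hm
  have hmnn : ∀ i j, 0 ≤ m i j := fun i j => norm_nonneg _
  -- the iterated sequence
  set w : ℕ → (Fin n → ℝ) × (Fin n → ℝ) :=
    fun k => Nat.rec ((fun _ => 1), (fun _ => 1))
      (fun _ w => ((fun i => r * ∑ j, m i j * w.2 j), (fun j => r * ∑ i, m i j * w.1 i))) k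
    with hw
  set u : ℕ → Fin n → ℝ := fun k => (w k).1 with hu
  set v : ℕ → Fin n → ℝ := fun k => (w k).2 with hv
  have hu0 : ∀ i, u 0 i = 1 := fun _ => rfl
  have hv0 : ∀ j, v 0 j = 1 := fun _ => rfl
  have huS : ∀ k i, u (k+1) i = r * ∑ j, m i j * v k j := fun _ _ => rfl
  have hvS : ∀ k j, v (k+1) j = r * ∑ i, m i j * u k i := fun _ _ => rfl
  -- nonnegativity
  have hnn : ∀ k, (∀ i, 0 ≤ u k i) ∧ (∀ j, 0 ≤ v k j) := by
    intro k
    induction k with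
    | zero => exact ⟨fun _ => zero_le_one, fun _ => zero_le_one⟩
    | succ k ih =>
      refine ⟨fun i => ?_, fun j => ?_⟩
      · rw [huS]
        exact mul_nonneg hr0.le (Finset.sum_nonneg fun j _ =>
          mul_nonneg (hmnn i j) (ih.2 j))
      · rw [hvS]
        exact mul_nonneg hr0.le (Finset.sum_nonneg fun i _ =>
          mul_nonneg (hmnn i j) (ih.1 i))
  -- norm bound
  have hbnd : ∀ k, (∑ i, (u k i)^2) + (∑ j, (v k j)^2) ≤ (2 * n) * r^(2*k) := by
    intro k
    induction k with
    | zero =>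
      simp [hu0, hv0]
      ring_nf
      norm_num
    | succ k ih =>
      have h1 : ∑ i, (u (k+1) i)^2 ≤ r^2 * ∑ j, (v k j)^2 := by
        calc ∑ i, (u (k+1) i)^2 = r^2 * ∑ i, (∑ j, m i j * v k j)^2 := by
              rw [Finset.mul_sum]
              exact Finset.sum_congr rfl fun i _ => by rw [huS]; ring
        _ ≤ r^2 * ∑ j, (v k j)^2 := by
              exact mul_le_mul_of_nonneg_left (hM (v k)) (sq_nonneg r)
      have h2 : ∑ j, (v (k+1) j)^2 ≤ r^2 * ∑ i, (u k i)^2 := by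
        calc ∑ j, (v (k+1) j)^2 = r^2 * ∑ j, (∑ i, m i j * u k i)^2 := by
              rw [Finset.mul_sum]
              exact Finset.sum_congr rfl fun j _ => by rw [hvS]; ring
        _ ≤ r^2 * ∑ i, (u k i)^2 := by
              exact mul_le_mul_of_nonneg_left (hMT (u k)) (sq_nonneg r)
      calc (∑ i, (u (k+1) i)^2) + (∑ j, (v (k+1) j)^2)
          ≤ r^2 * (∑ j, (v k j)^2) + r^2 * (∑ i, (u k i)^2) := add_le_add h1 h2
      _ = r^2 * ((∑ i, (u k i)^2) + (∑ j, (v k j)^2)) := by ring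
      _ ≤ r^2 * ((2 * n) * r^(2*k)) := mul_le_mul_of_nonneg_left ih (sq_nonneg r)
      _ = (2 * n) * r^(2*(k+1)) := by ring
  -- entrywise bound
  have hub : ∀ k i, u k i ≤ Real.sqrt (2 * n) * r ^ k := by
    intro k i
    have h1 : (u k i)^2 ≤ (2 * n) * r^(2*k) := by
      refine le_trans ?_ (hbnd k)
      have : (u k i)^2 ≤ ∑ i, (u k i)^2 :=
        Finset.single_le_sum (fun i _ => sq_nonneg (u k i)) (Finset.mem_univ i)
      exact this.trans (le_add_of_nonneg_right (Finset.sum_nonneg fun j _ => sq_nonneg _))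
    have h2 : u k i = Real.sqrt ((u k i)^2) := (Real.sqrt_sq ((hnn k).1 i)).symm
    rw [h2]
    calc Real.sqrt ((u k i)^2) ≤ Real.sqrt ((2*n) * r^(2*k)) := Real.sqrt_le_sqrt h1
    _ = Real.sqrt (2*n) * r^k := by
        rw [show (2*(n:ℝ)) * r^(2*k) = (2*(n:ℝ)) * (r^k)^2 by ring,
          Real.sqrt_mul (by positivity), Real.sqrt_sq (by positivity)]
  have hvb : ∀ k j, v k j ≤ Real.sqrt (2 * n) * r ^ k := by
    intro k j
    have h1 : (v k j)^2 ≤ (2 * n) * r^(2*k) := by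
      refine le_trans ?_ (hbnd k)
      have : (v k j)^2 ≤ ∑ j, (v k j)^2 :=
        Finset.single_le_sum (fun j _ => sq_nonneg (v k j)) (Finset.mem_univ j)
      exact this.trans (le_add_of_nonneg_left (Finset.sum_nonneg fun i _ => sq_nonneg _))
    have h2 : v k j = Real.sqrt ((v k j)^2) := (Real.sqrt_sq ((hnn k).2 j)).symm
    rw [h2]
    calc Real.sqrt ((v k j)^2) ≤ Real.sqrt ((2*n) * r^(2*k)) := Real.sqrt_le_sqrt h1
    _ = Real.sqrt (2*n) * r^k := by
        rw [show (2*(n:ℝ)) * r^(2*k) = (2*(n:ℝ)) * (r^k)^2 by ring,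
          Real.sqrt_mul (by positivity), Real.sqrt_sq (by positivity)]
  -- summability
  have hgeo : Summable (fun k : ℕ => Real.sqrt (2*n) * r ^ k) :=
    (summable_geometric_of_lt_one hr0.le hr1).mul_left _
  have hsu : ∀ i, Summable (fun k => u k i) := fun i =>
    Summable.of_nonneg_of_le (fun k => (hnn k).1 i) (fun k => hub k i) hgeo
  have hsv : ∀ j, Summable (fun k => v k j) := fun j =>
    Summable.of_nonneg_of_le (fun k => (hnn k).2 j) (fun k => hvb k j) hgeo
  set q : Fin n → ℝ := fun i => ∑' k, u k i with hq
  set p : Fin n → ℝ := fun j => ∑' k, v k j with hp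
  have hq1 : ∀ i, 1 ≤ q i := by
    intro i
    have := Summable.le_tsum (hsu i) 0 (fun k _ => (hnn k).1 i)
    rwa [hu0] at this
  have hp1 : ∀ j, 1 ≤ p j := by
    intro j
    have := Summable.le_tsum (hsv j) 0 (fun k _ => (hnn k).2 j)
    rwa [hv0] at this
  have hq0 : ∀ i, 0 < q i := fun i => lt_of_lt_of_le one_pos (hq1 i)
  have hp0 : ∀ j, 0 < p j := fun j => lt_of_lt_of_le one_pos (hp1 j)
  -- key identities
  have hqid : ∀ i, r * (∑ j, m i j * p j) = q i - 1 := by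
    intro i
    have step1 : ∀ j, r * (m i j * p j) = ∑' k, r * m i j * v k j := by
      intro j
      rw [tsum_mul_left (a := r * m i j), ← mul_assoc]
    calc r * (∑ j, m i j * p j) = ∑ j, ∑' k, r * m i j * v k j := by
          rw [Finset.mul_sum]
          exact Finset.sum_congr rfl fun j _ => step1 j
    _ = ∑' k, ∑ j, r * m i j * v k j := (Summable.tsum_finsetSum (fun j _ => (hsv j).mul_left _)).symm
    _ = ∑' k, u (k+1) i := by
          congr 1 with k
          rw [huS, Finset.mul_sum]
          exact Finset.sum_congr rfl fun j _ => by ring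
    _ = q i - 1 := by
          have := Summable.tsum_eq_zero_add (hsu i)
          rw [hu0] at this
          rw [hq]
          linarith [this]
  have hpid : ∀ j, r * (∑ i, m i j * q i) = p j - 1 := by
    intro j
    have step1 : ∀ i, r * (m i j * q i) = ∑' k, r * m i j * u k i := by
      intro i
      rw [tsum_mul_left (a := r * m i j), ← mul_assoc]
    calc r * (∑ i, m i j * q i) = ∑ i, ∑' k, r * m i j * u k i := by
          rw [Finset.mul_sum]
          exact Finset.sum_congr rfl fun i _ => step1 i
    _ = ∑' k, ∑ i, r * m i j * u k i := (Summable.tsum_finsetSum (fun i _ => (hsu i).mul_left _)).symm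
    _ = ∑' k, v (k+1) j := by
          congr 1 with k
          rw [hvS, Finset.mul_sum]
          exact Finset.sum_congr rfl fun i _ => by ring
    _ = p j - 1 := by
          have := Summable.tsum_eq_zero_add (hsv j)
          rw [hv0] at this
          rw [hp]
          linarith [this]
  -- the factorization
  refine ⟨fun i j => c i j * ((Real.sqrt (r * p j / q i) / Real.sqrt (m i j) : ℝ) : ℂ),
          fun i j => ((Real.sqrt (m i j) * Real.sqrt (r * q i / p j) : ℝ) : ℂ), ?_, ?_, ?_⟩
  · intro i j
    by_cases hz : m i j = 0
    · have hc0 : c i j = 0 := by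
        have := hz
        rw [hm] at this
        exact norm_eq_zero.mp this
      simp [hc0]
    · have hmpos : 0 < m i j := lt_of_le_of_ne (hmnn i j) (Ne.symm hz)
      have hqi : q i ≠ 0 := ne_of_gt (hq0 i)
      have hpj : p j ≠ 0 := ne_of_gt (hp0 j)
      have hrpq : 0 ≤ r * p j / q i := div_nonneg (mul_nonneg hr0.le (hp0 j).le) (hq0 i).le
      have hs : Real.sqrt (r * p j / q i) * Real.sqrt (r * q i / p j) = r := by
        have h1 : r * p j / q i * (r * q i / p j) = r ^ 2 := by
          field_simp
        rw [← Real.sqrt_mul hrpq, h1]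
        exact Real.sqrt_sq hr0.le
      have hfac : Real.sqrt (r * p j / q i) / Real.sqrt (m i j) *
          (Real.sqrt (m i j) * Real.sqrt (r * q i / p j)) = r := by
        have hne : Real.sqrt (m i j) ≠ 0 := by positivity
        have e : Real.sqrt (r * p j / q i) / Real.sqrt (m i j) *
            (Real.sqrt (m i j) * Real.sqrt (r * q i / p j)) =
            Real.sqrt (r * p j / q i) * Real.sqrt (r * q i / p j) *
              (Real.sqrt (m i j) / Real.sqrt (m i j)) := by ring
        rw [e, div_self hne, mul_one, hs]
      have e2 : (r : ℂ) * c i j = c i j * ((Real.sqrt (r * p j / q i) / Real.sqrt (m i j) *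
          (Real.sqrt (m i j) * Real.sqrt (r * q i / p j)) : ℝ) : ℂ) := by
        rw [hfac]; ring
      rw [e2]; push_cast; ring
  · intro i
    have habs : ∀ j, ‖c i j * ((Real.sqrt (r * p j / q i) / Real.sqrt (m i j) : ℝ) : ℂ)‖ ^ 2
        = r * (m i j * p j) / q i := by
      intro j
      by_cases hz : m i j = 0
      · have hc0 : c i j = 0 := norm_eq_zero.mp hz
        simp [hc0, hz]
      · have hmpos : 0 < m i j := lt_of_le_of_ne (hmnn i j) (Ne.symm hz)
        have hqi : q i ≠ 0 := ne_of_gt (hq0 i)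
        have hrpq : 0 ≤ r * p j / q i := div_nonneg (mul_nonneg hr0.le (hp0 j).le) (hq0 i).le
        rw [norm_mul, Complex.norm_real, Real.norm_of_nonneg (by positivity)]
        have hcm : ‖c i j‖ = m i j := rfl
        rw [hcm, mul_pow, div_pow, Real.sq_sqrt hrpq, Real.sq_sqrt (hmnn i j)]
        field_simp
    calc ∑ j, ‖c i j * ((Real.sqrt (r * p j / q i) / Real.sqrt (m i j) : ℝ) : ℂ)‖ ^ 2
        = ∑ j, r * (m i j * p j) / q i := Finset.sum_congr rfl fun j _ => habs j
    _ = (r * ∑ j, m i j * p j) / q i := by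
        rw [Finset.mul_sum, Finset.sum_div]
    _ = (q i - 1) / q i := by rw [hqid i]
    _ ≤ 1 := by
        rw [div_le_one (hq0 i)]; linarith
  · intro j
    have habs : ∀ i, ‖((Real.sqrt (m i j) * Real.sqrt (r * q i / p j) : ℝ) : ℂ)‖ ^ 2
        = r * (m i j * q i) / p j := by
      intro i
      have hpj : p j ≠ 0 := ne_of_gt (hp0 j)
      have hrqp : 0 ≤ r * q i / p j := div_nonneg (mul_nonneg hr0.le (hq0 i).le) (hp0 j).le
      have hnn2 : 0 ≤ Real.sqrt (m i j) * Real.sqrt (r * q i / p j) :=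
        mul_nonneg (Real.sqrt_nonneg _) (Real.sqrt_nonneg _)
      rw [Complex.norm_real, Real.norm_of_nonneg hnn2, mul_pow,
        Real.sq_sqrt (hmnn i j), Real.sq_sqrt hrqp]
      field_simp
    calc ∑ i, ‖((Real.sqrt (m i j) * Real.sqrt (r * q i / p j) : ℝ) : ℂ)‖ ^ 2
        = ∑ i, r * (m i j * q i) / p j := Finset.sum_congr rfl fun i _ => habs i
    _ = (r * ∑ i, m i j * q i) / p j := by
        rw [Finset.mul_sum, Finset.sum_div]
    _ = (p j - 1) / p j := by rw [hpid j]
    _ ≤ 1 := by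
        rw [div_le_one (hp0 j)]; linarith
end

section
variable {n : ℕ}

lemma factor_limit (c : Matrix (Fin n) (Fin n) ℂ)
    (h : ∀ r : ℝ, 0 < r → r < 1 →
      ∃ a b : Fin n → Fin n → ℂ,
        (∀ i j, (r : ℂ) * c i j = a i j * b i j) ∧
        (∀ i, ∑ j, ‖a i j‖ ^ 2 ≤ 1) ∧
        (∀ j, ∑ i, ‖b i j‖ ^ 2 ≤ 1)) :
    ∃ a b : Fin n → Fin n → ℂ,
      (∀ i j, c i j = a i j * b i j) ∧
      (∀ i, ∑ j, ‖a i j‖ ^ 2 ≤ 1) ∧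
      (∀ j, ∑ i, ‖b i j‖ ^ 2 ≤ 1) := by
  classical
  set E := (Fin n → Fin n → ℂ) × (Fin n → Fin n → ℂ)
  set K : Set E := {x | (∀ i, ∑ j, ‖x.1 i j‖ ^ 2 ≤ 1) ∧
      (∀ j, ∑ i, ‖x.2 i j‖ ^ 2 ≤ 1)} with hK
  set F : E → (Fin n → Fin n → ℂ) := fun x => fun i j => x.1 i j * x.2 i j with hF
  -- continuity of F
  have hFc : Continuous F := by
    refine continuous_pi fun i => continuous_pi fun j => Continuous.mul ?_ ?_
    · exact (continuous_apply j).comp ((continuous_apply i).comp continuous_fst)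
    · exact (continuous_apply j).comp ((continuous_apply i).comp continuous_snd)
  -- K is closed
  have hKc : IsClosed K := by
    have : K = (⋂ i, {x : E | ∑ j, ‖x.1 i j‖ ^ 2 ≤ 1}) ∩
        (⋂ j, {x : E | ∑ i, ‖x.2 i j‖ ^ 2 ≤ 1}) := by
      ext x
      simp [hK, Set.mem_iInter, Set.mem_setOf_eq]
    rw [this]
    refine IsClosed.inter (isClosed_iInter fun i => ?_) (isClosed_iInter fun j => ?_)
    · refine isClosed_le ?_ continuous_const
      refine continuous_finset_sum _ fun j _ => ?_
      exact (continuous_norm.comp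
        ((continuous_apply j).comp ((continuous_apply i).comp continuous_fst))).pow 2
    · refine isClosed_le ?_ continuous_const
      refine continuous_finset_sum _ fun i _ => ?_
      exact (continuous_norm.comp
        ((continuous_apply j).comp ((continuous_apply i).comp continuous_snd))).pow 2
  -- K is bounded
  have hKb : K ⊆ Metric.closedBall (0 : E) 1 := by
    intro x hx
    rw [mem_closedBall_zero_iff]
    have hpt : ∀ z : ℂ, ‖z‖ ^ 2 ≤ 1 → ‖z‖ ≤ 1 := fun z h => by
      nlinarith [norm_nonneg z]
    have hent : ∀ (f : Fin n → Fin n → ℂ), (∀ i j, ‖f i j‖ ≤ 1) →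
        ‖f‖ ≤ 1 := by
      intro f hf
      rw [pi_norm_le_iff_of_nonneg zero_le_one]
      intro i
      rw [pi_norm_le_iff_of_nonneg zero_le_one]
      intro j
      exact hf i j
    have h1 : ∀ i j, ‖x.1 i j‖ ≤ 1 := fun i j =>
      hpt _ ((Finset.single_le_sum (f := fun j => ‖x.1 i j‖ ^ 2)
        (fun j _ => sq_nonneg _) (Finset.mem_univ j)).trans (hx.1 i))
    have h2 : ∀ i j, ‖x.2 i j‖ ≤ 1 := fun i j =>
      hpt _ ((Finset.single_le_sum (f := fun i => ‖x.2 i j‖ ^ 2)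
        (fun i _ => sq_nonneg _) (Finset.mem_univ i)).trans (hx.2 j))
    calc ‖x‖ = max ‖x.1‖ ‖x.2‖ := rfl
    _ ≤ 1 := max_le (hent x.1 h1) (hent x.2 h2)
  have hKcpt : IsCompact K :=
    IsCompact.of_isClosed_subset (isCompact_closedBall (0 : E) 1) hKc hKb
  -- the sequence
  set r : ℕ → ℝ := fun k => 1 - 1 / ((k : ℝ) + 2) with hr
  have hr0 : ∀ k, 0 < r k := by
    intro k
    have hk : (0:ℝ) ≤ (k : ℝ) := Nat.cast_nonneg k
    have h2 : 1 / ((k : ℝ) + 2) < 1 := by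
      rw [div_lt_one (by positivity)]
      linarith
    simp only [hr]
    linarith
  have hr1 : ∀ k, r k < 1 := by
    intro k
    have : 0 < 1 / ((k : ℝ) + 2) := by positivity
    simp [hr]
    linarith
  have hmem : ∀ k : ℕ, (fun i j => ((r k : ℝ) : ℂ) * c i j) ∈ F '' K := by
    intro k
    obtain ⟨a, b, hab, ha, hb⟩ := h (r k) (hr0 k) (hr1 k)
    exact ⟨(a, b), ⟨ha, hb⟩, by funext i j; exact (hab i j).symm⟩
  have htend : Filter.Tendsto (fun k : ℕ => (fun i j => ((r k : ℝ) : ℂ) * c i j))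
      Filter.atTop (nhds (fun i j => c i j)) := by
    rw [tendsto_pi_nhds]
    intro i
    rw [tendsto_pi_nhds]
    intro j
    have h1 : Filter.Tendsto r Filter.atTop (nhds 1) := by
      have h2 : Filter.Tendsto (fun k : ℕ => (k : ℝ) + 2) Filter.atTop Filter.atTop :=
        Filter.tendsto_atTop_add_const_right _ 2 tendsto_natCast_atTop_atTop
      have h3 : Filter.Tendsto (fun k : ℕ => 1 / ((k : ℝ) + 2)) Filter.atTop (nhds 0) :=
        Filter.Tendsto.div_atTop tendsto_const_nhds h2
      have h4 := (tendsto_const_nhds (x := (1:ℝ)) (f := Filter.atTop (α := ℕ))).sub h3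
      show Filter.Tendsto (fun k : ℕ => 1 - 1/((k:ℝ)+2)) Filter.atTop (nhds 1)
      simpa using h4
    have h2 : Filter.Tendsto (fun k => ((r k : ℝ) : ℂ)) Filter.atTop (nhds ((1:ℝ) : ℂ)) :=
      (Complex.continuous_ofReal.tendsto _).comp h1
    have h3 := h2.mul_const (c i j)
    simpa using h3
  have hcmem : (fun i j => c i j) ∈ F '' K :=
    (hKcpt.image hFc).isClosed.mem_of_tendsto htend (Filter.Eventually.of_forall hmem)
  obtain ⟨⟨a, b⟩, ⟨ha, hb⟩, habF⟩ := hcmem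
  exact ⟨a, b, fun i j => (congrFun (congrFun habF i) j).symm, ha, hb⟩

end
lemma easy_dir {n : ℕ} (c a b : Matrix (Fin n) (Fin n) ℂ)
    (hab : ∀ i j, c i j = a i j * b i j)
    (ha : ∀ i, ∑ j, ‖a i j‖ ^ 2 ≤ 1)
    (hb : ∀ j, ∑ i, ‖b i j‖ ^ 2 ≤ 1) :
    regNorm c ≤ 1 := by
  set A : Matrix (Fin n) (Fin n) ℂ := Matrix.of fun i j => (‖c i j‖ : ℂ) with hA
  refine ContinuousLinearMap.opNorm_le_bound _ zero_le_one ?_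
  intro x
  rw [one_mul]
  have hcoord : ∀ i, (Matrix.toEuclideanCLM (𝕜 := ℂ) A x) i
      = ∑ j, (‖c i j‖ : ℂ) * x j := by
    intro i
    rfl
  rw [EuclideanSpace.norm_eq, EuclideanSpace.norm_eq]
  refine Real.sqrt_le_sqrt ?_
  have hstep : ∀ i, ‖(Matrix.toEuclideanCLM (𝕜 := ℂ) A x) i‖ ^ 2
      ≤ ∑ j, ‖b i j‖ ^ 2 * ‖x j‖ ^ 2 := by
    intro i
    rw [hcoord i]
    have h1 : ‖∑ j, (‖c i j‖ : ℂ) * x j‖ ≤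
        ∑ j, ‖a i j‖ * (‖b i j‖ * ‖x j‖) := by
      refine (norm_sum_le _ _).trans ?_
      refine Finset.sum_le_sum fun j _ => ?_
      rw [norm_mul, Complex.norm_real, Real.norm_eq_abs, abs_of_nonneg (norm_nonneg _)]
      rw [hab i j, norm_mul, mul_assoc]
    have h2 : ‖∑ j, (‖c i j‖ : ℂ) * x j‖ ^ 2 ≤
        (∑ j, ‖a i j‖ * (‖b i j‖ * ‖x j‖)) ^ 2 :=
      pow_le_pow_left₀ (norm_nonneg _) h1 2
    refine h2.trans ?_
    calc (∑ j, ‖a i j‖ * (‖b i j‖ * ‖x j‖)) ^ 2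
        ≤ (∑ j, ‖a i j‖ ^ 2) * (∑ j, (‖b i j‖ * ‖x j‖) ^ 2) :=
          Finset.sum_mul_sq_le_sq_mul_sq _ _ _
    _ ≤ 1 * (∑ j, (‖b i j‖ * ‖x j‖) ^ 2) := by
          refine mul_le_mul_of_nonneg_right (ha i) ?_
          exact Finset.sum_nonneg fun j _ => sq_nonneg _
    _ = ∑ j, ‖b i j‖ ^ 2 * ‖x j‖ ^ 2 := by
          rw [one_mul]
          exact Finset.sum_congr rfl fun j _ => by ring
  calc ∑ i, ‖(Matrix.toEuclideanCLM (𝕜 := ℂ) A x) i‖ ^ 2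
      ≤ ∑ i, ∑ j, ‖b i j‖ ^ 2 * ‖x j‖ ^ 2 := Finset.sum_le_sum fun i _ => hstep i
  _ = ∑ j, (∑ i, ‖b i j‖ ^ 2) * ‖x j‖ ^ 2 := by
      rw [Finset.sum_comm]
      exact Finset.sum_congr rfl fun j _ => (Finset.sum_mul _ _ _).symm
  _ ≤ ∑ j, 1 * ‖x j‖ ^ 2 := by
      refine Finset.sum_le_sum fun j _ => ?_
      exact mul_le_mul_of_nonneg_right (hb j) (sq_nonneg _)
  _ = ∑ j, ‖x j‖ ^ 2 := Finset.sum_congr rfl fun j _ => one_mul _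

/-- `‖[c_{ij}]‖_reg ≤ 1` iff there is an entrywise factorization
`c_{ij} = a_{ij} b_{ij}` with `sup_i ∑_j |a_{ij}|² ≤ 1` and `sup_j ∑_i |b_{ij}|² ≤ 1`. -/
theorem stmt_1 {n : ℕ} (c : Matrix (Fin n) (Fin n) ℂ) :
    regNorm c ≤ 1 ↔
      ∃ a b : Matrix (Fin n) (Fin n) ℂ,
        (∀ i j, c i j = a i j * b i j) ∧
        (∀ i, ∑ j, ‖a i j‖ ^ 2 ≤ 1) ∧
        (∀ j, ∑ i, ‖b i j‖ ^ 2 ≤ 1) := by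
  constructor
  · intro h
    have hM := key1 c h
    have hMT := key2 (fun i j => ‖c i j‖) hM
    obtain ⟨a, b, hab, ha, hb⟩ := factor_limit c (fun r hr0 hr1 => factor_lt c hM hMT r hr0 hr1)
    exact ⟨Matrix.of a, Matrix.of b, hab, ha, hb⟩
  · rintro ⟨a, b, hab, ha, hb⟩
    exact easy_dir c a b hab ha hb
end

section
/- Let X be a complex Banach space, let T : X → X be a Ritt operator, and let N ≥ 1 be an integer. Then the set { n^N (rT)^{n−1} (I − rT)^N : n ≥ 1, r ∈ (0, 1] } is bounded in operator norm; that is, there exists a constant C ≥ 0 such that ‖(rT)^{n−1} (I − rT)^N‖ ≤ C / n^N for all integers n ≥ 1 and all r ∈ (0, 1]. -/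
-- Bernoulli-type bound
lemma bern_aux (n : ℕ) (hn : 1 ≤ n) (r : ℝ) (hr : r ∈ Set.Ioc (0:ℝ) 1) :
    (n : ℝ) * (1 - r) * r ^ (n - 1) ≤ 2 := by
  obtain ⟨hr0, hr1⟩ := hr
  rcases eq_or_lt_of_le hr1 with h | h
  · subst h; simp
  rcases Nat.eq_or_lt_of_le hn with h1 | h1
  · subst h1; simp; nlinarith
  -- n ≥ 2
  set s : ℝ := 1 - r with hs
  have hs0 : 0 < s := by simp [hs]; linarith
  have hb : 1 + ((n:ℝ) - 1) * s ≤ (1 + s) ^ (n - 1) := by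
    have := one_add_mul_le_pow (a := s) (by linarith) (n - 1)
    have hcast : ((n - 1 : ℕ) : ℝ) = (n : ℝ) - 1 := by
      have : (1:ℕ) ≤ n := hn; push_cast [Nat.cast_sub this]; ring
    rwa [hcast] at this
  have hr' : r ^ (n - 1) * (1 + s) ^ (n - 1) ≤ 1 := by
    rw [← mul_pow]
    apply pow_le_one₀
    · nlinarith
    · nlinarith
  have hkey : ((n:ℝ) - 1) * s * r ^ (n - 1) ≤ 1 := by
    have hrp : (0:ℝ) ≤ r ^ (n - 1) := by positivity
    nlinarith [mul_le_mul_of_nonneg_left hb hrp]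
  have hn2 : (2:ℝ) ≤ (n:ℝ) := by exact_mod_cast h1
  have hrp : (0:ℝ) ≤ r ^ (n - 1) := by positivity
  nlinarith [mul_nonneg (mul_nonneg (by linarith : (0:ℝ) ≤ (n:ℝ) - 2) hs0.le) hrp]

lemma key_lemma {X : Type*} [NormedAddCommGroup X] [NormedSpace ℂ X]
    (S : X →L[ℂ] X) (C : ℝ) (hC : 0 ≤ C)
    (h : ∀ n : ℕ, 1 ≤ n → (n : ℝ) * ‖S ^ (n - 1) * (1 - S)‖ ≤ C) :
    ∀ N : ℕ, 1 ≤ N → ∀ n : ℕ, 1 ≤ n →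
      (n : ℝ) ^ N * ‖S ^ (n - 1) * (1 - S) ^ N‖ ≤ C ^ N * 2 ^ (N * N) := by
  intro N
  induction N with
  | zero => omega
  | succ N ih =>
    intro _ n hn
    rcases Nat.eq_or_lt_of_le (Nat.one_le_iff_ne_zero.mpr (by omega) : 1 ≤ N + 1) with h1 | h1
    · -- N + 1 = 1 is impossible to pattern match; handle N = 0
      have hN0 : N = 0 := by omega
      subst hN0
      have := h n hn
      calc (n:ℝ) ^ (0+1) * ‖S ^ (n-1) * (1 - S) ^ (0+1)‖
          = (n:ℝ) * ‖S ^ (n-1) * (1 - S)‖ := by rw [zero_add, pow_one, pow_one]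
        _ ≤ C := this
        _ ≤ C ^ (0+1) * 2 ^ ((0+1) * (0+1)) := by norm_num; linarith
    · have hN : 1 ≤ N := by omega
      set a := (n - 1) / 2 with ha
      set b := n - 1 - a with hb
      have hab : a + b = n - 1 := by omega
      have hna : n ≤ 2 * (a + 1) := by omega
      have hnb : n ≤ 2 * (b + 1) := by omega
      have hcomm : Commute S (1 - S) := (Commute.one_right S).sub_right (Commute.refl S)
      have hsplit : S ^ (n - 1) * (1 - S) ^ (N + 1)
          = (S ^ a * (1 - S) ^ N) * (S ^ b * (1 - S)) := by
        have hc : (1 - S) ^ N * S ^ b = S ^ b * (1 - S) ^ N :=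
          ((hcomm.symm).pow_pow N b).eq
        calc S ^ (n - 1) * (1 - S) ^ (N + 1)
            = (S ^ a * S ^ b) * ((1 - S) ^ N * (1 - S)) := by
              rw [← pow_add, hab, ← pow_succ]
          _ = S ^ a * ((S ^ b * (1 - S) ^ N) * (1 - S)) := by
              rw [mul_assoc, mul_assoc]
          _ = S ^ a * (((1 - S) ^ N * S ^ b) * (1 - S)) := by rw [hc]
          _ = (S ^ a * (1 - S) ^ N) * (S ^ b * (1 - S)) := by
              rw [mul_assoc, ← mul_assoc, ← mul_assoc]
      have hA := ih hN (a + 1) (by omega)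
      have hB := h (b + 1) (by omega)
      simp only [Nat.add_sub_cancel] at hA hB
      have hnormP : ‖S ^ (n - 1) * (1 - S) ^ (N + 1)‖
          ≤ ‖S ^ a * (1 - S) ^ N‖ * ‖S ^ b * (1 - S)‖ := by
        rw [hsplit]; exact norm_mul_le _ _
      have hnA : (0:ℝ) ≤ ‖S ^ a * (1 - S) ^ N‖ := norm_nonneg _
      have hnB : (0:ℝ) ≤ ‖S ^ b * (1 - S)‖ := norm_nonneg _
      have hne : (n:ℝ) ^ (N + 1) ≤ 2 ^ (N + 1) * ((a:ℝ) + 1) ^ N * ((b:ℝ) + 1) := by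
        have h1 : (n:ℝ) ≤ 2 * ((a:ℝ) + 1) := by exact_mod_cast hna
        have h2 : (n:ℝ) ≤ 2 * ((b:ℝ) + 1) := by exact_mod_cast hnb
        calc (n:ℝ) ^ (N + 1) = (n:ℝ) ^ N * (n:ℝ) := by ring
          _ ≤ (2 * ((a:ℝ) + 1)) ^ N * (2 * ((b:ℝ) + 1)) := by
              apply mul_le_mul (pow_le_pow_left₀ (by positivity) h1 N) h2 (by positivity)
              positivity
          _ = 2 ^ (N + 1) * ((a:ℝ) + 1) ^ N * ((b:ℝ) + 1) := by
              rw [mul_pow]; ring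
      have hAc : (((a:ℝ) + 1)) ^ N * ‖S ^ a * (1 - S) ^ N‖ ≤ C ^ N * 2 ^ (N * N) := by
        have : ((a + 1 : ℕ) : ℝ) = (a:ℝ) + 1 := by push_cast; ring
        rwa [this] at hA
      have hBc : ((b:ℝ) + 1) * ‖S ^ b * (1 - S)‖ ≤ C := by
        have : ((b + 1 : ℕ) : ℝ) = (b:ℝ) + 1 := by push_cast; ring
        rwa [this] at hB
      have main : (n:ℝ) ^ (N + 1) * ‖S ^ (n - 1) * (1 - S) ^ (N + 1)‖
          ≤ 2 ^ (N + 1) * (C ^ N * 2 ^ (N * N)) * C := by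
        calc (n:ℝ) ^ (N + 1) * ‖S ^ (n - 1) * (1 - S) ^ (N + 1)‖
            ≤ (2 ^ (N + 1) * ((a:ℝ) + 1) ^ N * ((b:ℝ) + 1)) *
              (‖S ^ a * (1 - S) ^ N‖ * ‖S ^ b * (1 - S)‖) := by
              apply mul_le_mul hne (by linarith [hnormP]) (norm_nonneg _) (by positivity)
          _ = 2 ^ (N + 1) * ((((a:ℝ) + 1) ^ N * ‖S ^ a * (1 - S) ^ N‖) *
              (((b:ℝ) + 1) * ‖S ^ b * (1 - S)‖)) := by ring
          _ ≤ 2 ^ (N + 1) * ((C ^ N * 2 ^ (N * N)) * C) := by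
              apply mul_le_mul_of_nonneg_left _ (by positivity)
              apply mul_le_mul hAc hBc (by positivity) (by positivity)
          _ = 2 ^ (N + 1) * (C ^ N * 2 ^ (N * N)) * C := by ring
      calc (n:ℝ) ^ (N + 1) * ‖S ^ (n - 1) * (1 - S) ^ (N + 1)‖
          ≤ 2 ^ (N + 1) * (C ^ N * 2 ^ (N * N)) * C := main
        _ = C ^ (N + 1) * 2 ^ (N * N + N + 1) := by rw [pow_add, pow_add]; ring
        _ ≤ C ^ (N + 1) * 2 ^ ((N + 1) * (N + 1)) := by
            apply mul_le_mul_of_nonneg_left _ (by positivity)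
            apply pow_le_pow_right₀ one_le_two (by nlinarith)

lemma ritt_smul {X : Type*} [NormedAddCommGroup X] [NormedSpace ℂ X]
    (T : X →L[ℂ] X) (M C2 : ℝ)
    (h1 : ∀ n : ℕ, ‖T ^ n‖ ≤ M)
    (h2 : ∀ n : ℕ, 1 ≤ n → (n : ℝ) * ‖T ^ n - T ^ (n - 1)‖ ≤ C2)
    (bern : ∀ n : ℕ, 1 ≤ n → ∀ r : ℝ, r ∈ Set.Ioc (0:ℝ) 1 →
      (n : ℝ) * (1 - r) * r ^ (n - 1) ≤ 2)
    (r : ℝ) (hr : r ∈ Set.Ioc (0:ℝ) 1) (n : ℕ) (hn : 1 ≤ n) :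
    (n : ℝ) * ‖((r : ℂ) • T) ^ (n - 1) * (1 - (r : ℂ) • T)‖ ≤ C2 + 2 * M := by
  obtain ⟨hr0, hr1⟩ := hr
  have hM : 0 ≤ M := le_trans (norm_nonneg _) (h1 0)
  have hsplit : ((r : ℂ) • T) ^ (n - 1) * (1 - (r : ℂ) • T)
      = (r : ℂ) ^ (n - 1) • (T ^ (n - 1) - T ^ n)
        + (((r ^ (n - 1) - r ^ n : ℝ)) : ℂ) • T ^ n := by
    have h1' : ((r : ℂ) • T) ^ (n - 1) * (1 - (r : ℂ) • T)
        = ((r : ℂ) • T) ^ (n - 1) - ((r : ℂ) • T) ^ n := by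
      rw [mul_sub, mul_one]
      congr 1
      rw [← pow_succ]
      congr 1
      omega
    rw [h1', smul_pow, smul_pow]
    push_cast
    rw [sub_smul]
    rw [smul_sub]
    abel
  have hnorm : ‖((r : ℂ) • T) ^ (n - 1) * (1 - (r : ℂ) • T)‖
      ≤ r ^ (n - 1) * ‖T ^ n - T ^ (n - 1)‖ + (r ^ (n - 1) * (1 - r)) * M := by
    rw [hsplit]
    refine le_trans (norm_add_le _ _) (add_le_add ?_ ?_)
    · rw [norm_smul ((r:ℂ)^(n-1)) (T ^ (n - 1) - T ^ n), norm_pow, Complex.norm_real, Real.norm_eq_abs, abs_of_pos hr0,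
        norm_sub_rev]
    · rw [norm_smul (((r ^ (n - 1) - r ^ n : ℝ)):ℂ) (T ^ n), Complex.norm_real, Real.norm_eq_abs]
      have hge : 0 ≤ r ^ (n - 1) - r ^ n := by
        have : r ^ n ≤ r ^ (n - 1) := pow_le_pow_of_le_one hr0.le hr1 (by omega)
        linarith
      rw [abs_of_nonneg hge]
      have heq : r ^ (n - 1) - r ^ n = r ^ (n - 1) * (1 - r) := by
        have hp : r ^ n = r ^ (n - 1) * r := by rw [← pow_succ]; congr 1; omega
        rw [hp]; ring
      rw [heq]
      exact mul_le_mul_of_nonneg_left (h1 n)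
        (mul_nonneg (by positivity) (by linarith))
  have hrpow : r ^ (n - 1) ≤ 1 := pow_le_one₀ hr0.le hr1
  have hb := bern n hn r ⟨hr0, hr1⟩
  have hT := h2 n hn
  have hTnn : 0 ≤ ‖T ^ n - T ^ (n - 1)‖ := norm_nonneg _
  have hrp : (0:ℝ) ≤ r ^ (n - 1) := by positivity
  have hnp : (0:ℝ) < n := by exact_mod_cast hn
  calc (n : ℝ) * ‖((r : ℂ) • T) ^ (n - 1) * (1 - (r : ℂ) • T)‖
      ≤ (n : ℝ) * (r ^ (n - 1) * ‖T ^ n - T ^ (n - 1)‖ + (r ^ (n - 1) * (1 - r)) * M) :=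
        mul_le_mul_of_nonneg_left hnorm hnp.le
    _ = r ^ (n - 1) * ((n:ℝ) * ‖T ^ n - T ^ (n - 1)‖) + ((n:ℝ) * (1 - r) * r ^ (n - 1)) * M := by
        ring
    _ ≤ 1 * C2 + 2 * M := by
        apply add_le_add
        · apply mul_le_mul hrpow hT (by positivity) one_pos.le
        · exact mul_le_mul_of_nonneg_right hb hM
    _ = C2 + 2 * M := by ring

/-- if `T` is a Ritt operator on a complex Banach space `X` and `N ≥ 1`, then
`‖(rT)^{n-1}(I - rT)^N‖ ≤ C / n^N` uniformly in `n ≥ 1` and `r ∈ (0, 1]`. -/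
theorem stmt_4 {X : Type*} [NormedAddCommGroup X] [NormedSpace ℂ X] [CompleteSpace X]
    (T : X →L[ℂ] X)
    (h1 : ∃ C : ℝ, ∀ n : ℕ, ‖T ^ n‖ ≤ C)
    (h2 : ∃ C : ℝ, ∀ n : ℕ, 1 ≤ n → (n : ℝ) * ‖T ^ n - T ^ (n - 1)‖ ≤ C)
    (N : ℕ) (hN : 1 ≤ N) :
    ∃ C : ℝ, 0 ≤ C ∧ ∀ (n : ℕ), 1 ≤ n → ∀ r : ℝ, r ∈ Set.Ioc (0 : ℝ) 1 →
      ‖((r : ℂ) • T) ^ (n - 1) * (1 - (r : ℂ) • T) ^ N‖ ≤ C / (n : ℝ) ^ N := by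
  obtain ⟨M, hM⟩ := h1
  obtain ⟨C2, hC2⟩ := h2
  have hMnn : 0 ≤ M := le_trans (norm_nonneg _) (hM 0)
  have hC2nn : 0 ≤ C2 := by
    have h := hC2 1 le_rfl
    push_cast at h
    nlinarith [norm_nonneg (T ^ 1 - T ^ (1 - 1))]
  set CR : ℝ := C2 + 2 * M with hCR
  have hCRnn : 0 ≤ CR := by positivity
  refine ⟨CR ^ N * 2 ^ (N * N), by positivity, ?_⟩
  intro n hn r hr
  have hritt : ∀ m : ℕ, 1 ≤ m →
      (m : ℝ) * ‖((r : ℂ) • T) ^ (m - 1) * (1 - (r : ℂ) • T)‖ ≤ CR := by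
    intro m hm
    exact ritt_smul T M C2 hM hC2 bern_aux r hr m hm
  have hkey := key_lemma ((r : ℂ) • T) CR hCRnn hritt N hN n hn
  have hnpos : (0:ℝ) < (n : ℝ) ^ N := by
    have : (0:ℝ) < (n:ℝ) := by exact_mod_cast hn
    positivity
  rw [le_div_iff₀ hnpos]
  linarith [hkey]
end

section
/- Let γ ∈ (0, π/2) and α > 0. Then for every integer n ≥ 1, n^α ∫_0^{cos γ} |1 − t e^{−iγ}|^n t^{α−1} dt ≤ (2 / cos γ)^α ∫_0^∞ u^{α−1} e^{−u} du; in particular the sequence (n^α ∫_0^{cos γ} |1 − t e^{−iγ}|^n t^{α−1} dt)_{n ≥ 1} is bounded. -/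
open MeasureTheory

/-- for `γ ∈ (0, π/2)` and `α > 0`,
`n^α ∫_0^{cos γ} |1 - t e^{-iγ}|^n t^{α-1} dt ≤ (2/cos γ)^α ∫_0^∞ u^{α-1} e^{-u} du`
for every `n ≥ 1`; in particular this sequence is bounded. -/
theorem stmt_5 (γ : ℝ) (hγ : γ ∈ Set.Ioo (0 : ℝ) (Real.pi / 2)) (α : ℝ) (hα : 0 < α) :
    (∀ n : ℕ, 1 ≤ n →
      (n : ℝ) ^ α *
          ∫ t in (0 : ℝ)..(Real.cos γ),
            ‖1 - (t : ℂ) * Complex.exp (-(γ : ℂ) * Complex.I)‖ ^ n *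
              t ^ (α - 1) ≤
        (2 / Real.cos γ) ^ α * ∫ u in Set.Ioi (0 : ℝ), u ^ (α - 1) * Real.exp (-u)) ∧
    ∃ C : ℝ, ∀ n : ℕ, 1 ≤ n →
      (n : ℝ) ^ α *
          ∫ t in (0 : ℝ)..(Real.cos γ),
            ‖1 - (t : ℂ) * Complex.exp (-(γ : ℂ) * Complex.I)‖ ^ n *
              t ^ (α - 1) ≤ C := by
  obtain ⟨hγ0, hγ2⟩ := hγ
  set c := Real.cos γ with hcdef
  have hc : 0 < c := Real.cos_pos_of_mem_Ioo ⟨by linarith [Real.pi_pos], hγ2⟩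
  have hc1 : c ≤ 1 := Real.cos_le_one γ
  have hΓ : ∫ u in Set.Ioi (0:ℝ), u ^ (α - 1) * Real.exp (-u) = Real.Gamma α := by
    rw [Real.Gamma_eq_integral hα]
    exact setIntegral_congr_fun measurableSet_Ioi fun x _ => by rw [mul_comm]
  -- pointwise bound on the modulus
  have habs : ∀ t ∈ Set.Icc (0:ℝ) c,
      ‖1 - (t : ℂ) * Complex.exp (-(γ : ℂ) * Complex.I)‖ ≤
        Real.exp (-(c * t / 2)) := by
    intro t ht
    obtain ⟨ht0, htc⟩ := ht
    have hz : (1 : ℂ) - (t : ℂ) * Complex.exp (-(γ : ℂ) * Complex.I) =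
        Complex.ofReal (1 - t * Real.cos γ) + Complex.ofReal (t * Real.sin γ) * Complex.I := by
      rw [show -(γ:ℂ)*Complex.I = ((-γ:ℝ):ℂ)*Complex.I by push_cast; ring,
        Complex.exp_mul_I, ← Complex.ofReal_cos, ← Complex.ofReal_sin]
      push_cast [Real.cos_neg, Real.sin_neg]
      ring
    have hsq : ‖1 - (t : ℂ) * Complex.exp (-(γ : ℂ) * Complex.I)‖ ^ 2 =
        1 - 2 * t * c + t ^ 2 := by
      rw [hz, Complex.sq_norm, Complex.normSq_add_mul_I]
      have := Real.sin_sq_add_cos_sq γ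
      rw [hcdef]; nlinarith [this]
    have h1 : ‖1 - (t : ℂ) * Complex.exp (-(γ : ℂ) * Complex.I)‖ ^ 2 ≤
        1 - t * c := by
      rw [hsq]; nlinarith
    have h2 : 1 - t * c ≤ Real.exp (-(t * c)) := by
      have := Real.add_one_le_exp (-(t * c)); linarith
    have h3 : Real.exp (-(t * c)) = Real.exp (-(c * t / 2)) ^ 2 := by
      rw [sq, ← Real.exp_add]; ring_nf
    have habs0 : 0 ≤ ‖1 - (t : ℂ) * Complex.exp (-(γ : ℂ) * Complex.I)‖ :=
      norm_nonneg _
    nlinarith [Real.exp_pos (-(c * t / 2)), h1, h2, h3]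
  -- The key bound
  have key : ∀ n : ℕ, 1 ≤ n →
      (n : ℝ) ^ α *
          ∫ t in (0 : ℝ)..c,
            ‖1 - (t : ℂ) * Complex.exp (-(γ : ℂ) * Complex.I)‖ ^ n *
              t ^ (α - 1) ≤ (2 / c) ^ α * Real.Gamma α := by
    intro n hn
    have hn0 : (0:ℝ) < n := by exact_mod_cast hn
    set k : ℝ := (n : ℝ) * c / 2 with hkdef
    have hk : 0 < k := by positivity
    -- integrability of the base function
    have hg : IntervalIntegrable (fun t : ℝ => t ^ (α - 1)) volume 0 c :=
      intervalIntegral.intervalIntegrable_rpow' (by linarith)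
    have hgc : IntervalIntegrable (fun t : ℝ => (2:ℝ) ^ n * t ^ (α - 1)) volume 0 c :=
      hg.const_mul _
    have hmeasf : AEStronglyMeasurable
        (fun t : ℝ => ‖1 - (t : ℂ) * Complex.exp (-(γ : ℂ) * Complex.I)‖ ^ n *
          t ^ (α - 1)) (volume.restrict (Set.uIoc (0:ℝ) c)) := by
      apply Measurable.aestronglyMeasurable
      apply Measurable.mul
      · exact ((continuous_norm.comp (by continuity)).pow n).measurable
      · exact (by fun_prop : Measurable fun t : ℝ => t ^ (α - 1))
    have hfi : IntervalIntegrable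
        (fun t : ℝ => ‖1 - (t : ℂ) * Complex.exp (-(γ : ℂ) * Complex.I)‖ ^ n *
          t ^ (α - 1)) volume 0 c := by
      refine hgc.mono_fun hmeasf ?_
      filter_upwards [ae_restrict_mem measurableSet_uIoc] with t ht
      rw [Set.uIoc_of_le hc.le] at ht
      obtain ⟨ht0, htc⟩ := ht
      have h2 : ‖1 - (t : ℂ) * Complex.exp (-(γ : ℂ) * Complex.I)‖ ≤ 2 := by
        calc ‖1 - (t : ℂ) * Complex.exp (-(γ : ℂ) * Complex.I)‖
            ≤ ‖(1:ℂ)‖ + ‖(t : ℂ) * Complex.exp (-(γ : ℂ) * Complex.I)‖ :=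
              norm_sub_le _ _
          _ ≤ 2 := by
              rw [norm_one, norm_mul, Complex.norm_exp]
              simp only [Complex.norm_real, Real.norm_eq_abs]
              have : ((-(γ : ℂ)) * Complex.I).re = 0 := by simp
              rw [this, Real.exp_zero, mul_one, abs_of_nonneg ht0.le]
              linarith
      have hpos : (0:ℝ) ≤ t ^ (α - 1) := Real.rpow_nonneg ht0.le _
      rw [Real.norm_eq_abs, Real.norm_eq_abs, abs_of_nonneg (by positivity),
        abs_of_nonneg (by positivity)]
      exact mul_le_mul_of_nonneg_right (pow_le_pow_left₀ (norm_nonneg _) h2 n) hpos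
    have hhi : IntervalIntegrable
        (fun t : ℝ => Real.exp (-(k * t)) * t ^ (α - 1)) volume 0 c := by
      refine hg.mono_fun ?_ ?_
      · apply Measurable.aestronglyMeasurable
        exact ((Real.continuous_exp.comp (by continuity)).measurable).mul
          (by fun_prop : Measurable fun t : ℝ => t ^ (α - 1))
      · filter_upwards [ae_restrict_mem measurableSet_uIoc] with t ht
        rw [Set.uIoc_of_le hc.le] at ht
        obtain ⟨ht0, _⟩ := ht
        have hpos : (0:ℝ) ≤ t ^ (α - 1) := Real.rpow_nonneg ht0.le _
        have he : Real.exp (-(k * t)) ≤ 1 := Real.exp_le_one_iff.mpr (by nlinarith)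
        rw [Real.norm_eq_abs, Real.norm_eq_abs, abs_of_nonneg (by positivity),
          abs_of_nonneg hpos]
        nlinarith [Real.exp_pos (-(k * t))]
    -- step 1: pointwise comparison of interval integrals
    have step1 : ∫ t in (0:ℝ)..c,
          ‖1 - (t : ℂ) * Complex.exp (-(γ : ℂ) * Complex.I)‖ ^ n * t ^ (α - 1)
        ≤ ∫ t in (0:ℝ)..c, Real.exp (-(k * t)) * t ^ (α - 1) := by
      refine intervalIntegral.integral_mono_on hc.le hfi hhi fun t ht => ?_
      have hpos : (0:ℝ) ≤ t ^ (α - 1) := Real.rpow_nonneg ht.1 _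
      refine mul_le_mul_of_nonneg_right ?_ hpos
      calc ‖1 - (t : ℂ) * Complex.exp (-(γ : ℂ) * Complex.I)‖ ^ n
          ≤ Real.exp (-(c * t / 2)) ^ n :=
            pow_le_pow_left₀ (norm_nonneg _) (habs t ht) n
        _ = Real.exp (-(k * t)) := by
            rw [← Real.exp_nat_mul]; congr 1; rw [hkdef]; ring
    -- step 2: extend to Ioi 0
    have hIoi : IntegrableOn (fun t : ℝ => t ^ (α - 1) * Real.exp (-(k * t)))
        (Set.Ioi (0:ℝ)) := by
      have := integrableOn_rpow_mul_exp_neg_mul_rpow (s := α - 1) (p := 1) (b := k)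
        (by linarith) zero_lt_one hk
      refine this.congr_fun (fun x hx => ?_) measurableSet_Ioi
      simp only [Real.rpow_one, pow_one, neg_mul]
    have step2 : ∫ t in (0:ℝ)..c, Real.exp (-(k * t)) * t ^ (α - 1)
        ≤ ∫ t in Set.Ioi (0:ℝ), t ^ (α - 1) * Real.exp (-(k * t)) := by
      rw [intervalIntegral.integral_of_le hc.le]
      have : ∫ t in Set.Ioc (0:ℝ) c, Real.exp (-(k * t)) * t ^ (α - 1)
          = ∫ t in Set.Ioc (0:ℝ) c, t ^ (α - 1) * Real.exp (-(k * t)) := by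
        exact setIntegral_congr_fun measurableSet_Ioc fun x _ => mul_comm _ _
      rw [this]
      refine setIntegral_mono_set hIoi ?_ ?_
      · filter_upwards [ae_restrict_mem measurableSet_Ioi] with t ht
        exact mul_nonneg (Real.rpow_nonneg (le_of_lt ht) _) (Real.exp_pos _).le
      · exact HasSubset.Subset.eventuallyLE Set.Ioc_subset_Ioi_self
    have hval : ∫ t in Set.Ioi (0:ℝ), t ^ (α - 1) * Real.exp (-(k * t))
        = (1 / k) ^ α * Real.Gamma α :=
      Real.integral_rpow_mul_exp_neg_mul_Ioi hα hk
    have hchain : ∫ t in (0:ℝ)..c,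
          ‖1 - (t : ℂ) * Complex.exp (-(γ : ℂ) * Complex.I)‖ ^ n * t ^ (α - 1)
        ≤ (1 / k) ^ α * Real.Gamma α := by
      rw [← hval]; exact step1.trans step2
    calc (n : ℝ) ^ α * ∫ t in (0:ℝ)..c,
          ‖1 - (t : ℂ) * Complex.exp (-(γ : ℂ) * Complex.I)‖ ^ n * t ^ (α - 1)
        ≤ (n : ℝ) ^ α * ((1 / k) ^ α * Real.Gamma α) :=
          mul_le_mul_of_nonneg_left hchain (Real.rpow_nonneg hn0.le _)
      _ = (2 / c) ^ α * Real.Gamma α := by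
          rw [← mul_assoc, ← Real.mul_rpow hn0.le (by positivity)]
          congr 2
          rw [hkdef]
          field_simp
    done
  exact ⟨fun n hn => by rw [hΓ]; exact key n hn, ⟨(2 / c) ^ α * Real.Gamma α, key⟩⟩
end

section
/- Let X be a complex Banach space, let T : X → X be a Ritt operator, and let N ≥ 1 be an integer. Then for every x in the range of I − T, the series ∑_{k=1}^∞ k^{N − 1/2} ‖T^{k−1} (I − T)^N x‖_X converges. -/
/-- if `T` is a Ritt operator on a complex Banach space `X`, `N ≥ 1` and
`x ∈ Ran(I - T)`, then `∑_{k≥1} k^{N-1/2} ‖T^{k-1}(I-T)^N x‖ < ∞`. -/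
theorem stmt_6 {X : Type*} [NormedAddCommGroup X] [NormedSpace ℂ X] [CompleteSpace X]
    (T : X →L[ℂ] X)
    (h1 : ∃ C : ℝ, ∀ n : ℕ, ‖T ^ n‖ ≤ C)
    (h2 : ∃ C : ℝ, ∀ n : ℕ, 1 ≤ n → (n : ℝ) * ‖T ^ n - T ^ (n - 1)‖ ≤ C)
    (N : ℕ) (hN : 1 ≤ N) (x : X) (hx : x ∈ Set.range fun y => y - T y) :
    Summable fun k : ℕ =>
      ((k : ℝ) + 1) ^ ((N : ℝ) - 1 / 2) * ‖(T ^ k) (((1 - T) ^ N) x)‖ := by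
  obtain ⟨C₀, hC₀⟩ := h2
  obtain ⟨y, hy⟩ := hx
  set C : ℝ := max C₀ 1 with hCdef
  have hC1 : (1 : ℝ) ≤ C := le_max_right _ _
  have hCpos : (0 : ℝ) < C := lt_of_lt_of_le one_pos hC1
  have hcomm : Commute T (1 - T) := (Commute.one_right T).sub_right (Commute.refl T)
  -- Step 1: ‖T^j * (1-T)‖ ≤ C/(j+1)
  have key1 : ∀ j : ℕ, ‖T ^ j * (1 - T)‖ ≤ C / ((j : ℝ) + 1) := by
    intro j
    have h := hC₀ (j + 1) (by omega)
    have heq : T ^ (j + 1) - T ^ (j + 1 - 1) = -(T ^ j * (1 - T)) := by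
      simp [pow_succ, mul_sub, mul_one]
    rw [heq, norm_neg] at h
    have hjpos : (0 : ℝ) < (j : ℝ) + 1 := by positivity
    rw [le_div_iff₀ hjpos]
    push_cast at h
    calc ‖T ^ j * (1 - T)‖ * ((j : ℝ) + 1) = ((j : ℝ) + 1) * ‖T ^ j * (1 - T)‖ := by ring
      _ ≤ C₀ := h
      _ ≤ C := le_max_left _ _
  -- Step 2: ‖T^k * (1-T)^m‖ ≤ (C*m/(k+1))^m for m ≥ 1
  have key2 : ∀ m : ℕ, 1 ≤ m → ∀ k : ℕ,
      ‖T ^ k * (1 - T) ^ m‖ ≤ (C * m / ((k : ℝ) + 1)) ^ m := by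
    intro m
    induction m with
    | zero => intro h; omega
    | succ m ih =>
      intro _ k
      rcases Nat.eq_zero_or_pos m with hm0 | hm1
      · subst hm0
        simpa using key1 k
      · -- split k = a + b with b = k / (m+1)
        set b : ℕ := k / (m + 1) with hbdef
        have hble : b ≤ k := Nat.div_le_self _ _
        set a : ℕ := k - b with hadef
        have hab : a + b = k := Nat.sub_add_cancel hble
        have hfact : T ^ k * (1 - T) ^ (m + 1)
            = (T ^ a * (1 - T) ^ m) * (T ^ b * (1 - T)) := by
          have hc : T ^ b * (1 - T) ^ m = (1 - T) ^ m * T ^ b :=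
            (hcomm.pow_pow b m)
          rw [← hab, pow_add, pow_succ]
          rw [mul_assoc (T ^ a) (T ^ b), ← mul_assoc (T ^ b), hc]
          simp [mul_assoc]
        have hkpos : (0 : ℝ) < (k : ℝ) + 1 := by positivity
        have hapos : (0 : ℝ) < (a : ℝ) + 1 := by positivity
        have hbpos : (0 : ℝ) < (b : ℝ) + 1 := by positivity
        -- real inequalities on the splitting
        have hb_mul : ((b : ℝ)) * ((m : ℝ) + 1) ≤ (k : ℝ) := by
          have := Nat.div_mul_le_self k (m + 1)
          calc ((b : ℝ)) * ((m : ℝ) + 1) = ((b * (m + 1) : ℕ) : ℝ) := by push_cast; ring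
            _ ≤ (k : ℝ) := by exact_mod_cast this
        have hk_lt : (k : ℝ) + 1 ≤ ((b : ℝ) + 1) * ((m : ℝ) + 1) := by
          have hlt : k < (b + 1) * (m + 1) :=
            (Nat.div_lt_iff_lt_mul (show 0 < m + 1 by omega)).mp (Nat.lt_succ_self b)
          have : k + 1 ≤ (b + 1) * (m + 1) := hlt
          calc (k : ℝ) + 1 = ((k + 1 : ℕ) : ℝ) := by push_cast; ring
            _ ≤ (((b + 1) * (m + 1) : ℕ) : ℝ) := by exact_mod_cast this
            _ = ((b : ℝ) + 1) * ((m : ℝ) + 1) := by push_cast; ring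
        have ha_ge : (m : ℝ) * ((k : ℝ) + 1) ≤ ((a : ℝ) + 1) * ((m : ℝ) + 1) := by
          have hca : (a : ℝ) = (k : ℝ) - (b : ℝ) := by
            rw [hadef]; push_cast [hble]; ring
          nlinarith [hb_mul]
        have hmpos : (0 : ℝ) < (m : ℝ) := by exact_mod_cast hm1
        -- the two factor bounds
        have hfac1 : C * m / ((a : ℝ) + 1) ≤ C * ((m : ℝ) + 1) / ((k : ℝ) + 1) := by
          rw [div_le_div_iff₀ hapos hkpos]
          nlinarith [ha_ge, hCpos.le]
        have hfac2 : C / ((b : ℝ) + 1) ≤ C * ((m : ℝ) + 1) / ((k : ℝ) + 1) := by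
          rw [div_le_div_iff₀ hbpos hkpos]
          nlinarith [hk_lt, hCpos.le]
        have h1' := ih hm1 a
        have h2' := key1 b
        have hnn1 : (0 : ℝ) ≤ C * m / ((a : ℝ) + 1) := by positivity
        have hnnK : (0 : ℝ) ≤ C * ((m : ℝ) + 1) / ((k : ℝ) + 1) := by positivity
        calc ‖T ^ k * (1 - T) ^ (m + 1)‖
            = ‖(T ^ a * (1 - T) ^ m) * (T ^ b * (1 - T))‖ := by rw [hfact]
          _ ≤ ‖T ^ a * (1 - T) ^ m‖ * ‖T ^ b * (1 - T)‖ := norm_mul_le _ _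
          _ ≤ (C * m / ((a : ℝ) + 1)) ^ m * (C / ((b : ℝ) + 1)) := by
              apply mul_le_mul h1' h2' (norm_nonneg _) (by positivity)
          _ ≤ (C * ((m : ℝ) + 1) / ((k : ℝ) + 1)) ^ m
                * (C * ((m : ℝ) + 1) / ((k : ℝ) + 1)) := by
              apply mul_le_mul (pow_le_pow_left₀ hnn1 hfac1 m) hfac2 (by positivity)
                (by positivity)
          _ = (C * ((m : ℝ) + 1) / ((k : ℝ) + 1)) ^ (m + 1) := by rw [pow_succ]
          _ = (C * ((m + 1 : ℕ) : ℝ) / ((k : ℝ) + 1)) ^ (m + 1) := by push_cast; ring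
  -- rewrite the vector
  have hxy : ∀ k : ℕ, (T ^ k) (((1 - T) ^ N) x) = (T ^ k * (1 - T) ^ (N + 1)) y := by
    intro k
    have hx' : x = ((1 - T : X →L[ℂ] X)) y := by
      rw [← hy]; simp [ContinuousLinearMap.sub_apply]
    rw [hx']
    simp [ContinuousLinearMap.mul_apply, pow_succ]
  set K : ℝ := (C * ((N : ℝ) + 1)) ^ (N + 1) * ‖y‖ with hKdef
  have hKnn : 0 ≤ K := by positivity
  -- comparison
  have hcomp : ∀ k : ℕ,
      ((k : ℝ) + 1) ^ ((N : ℝ) - 1 / 2) * ‖(T ^ k) (((1 - T) ^ N) x)‖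
        ≤ K * ((k : ℝ) + 1) ^ (-(3 / 2 : ℝ)) := by
    intro k
    have hkpos : (0 : ℝ) < (k : ℝ) + 1 := by positivity
    have hb : ‖(T ^ k) (((1 - T) ^ N) x)‖
        ≤ (C * ((N : ℝ) + 1) / ((k : ℝ) + 1)) ^ (N + 1) * ‖y‖ := by
      rw [hxy k]
      calc ‖(T ^ k * (1 - T) ^ (N + 1)) y‖
          ≤ ‖T ^ k * (1 - T) ^ (N + 1)‖ * ‖y‖ := (T ^ k * (1 - T) ^ (N + 1)).le_opNorm y
        _ ≤ (C * ((N : ℝ) + 1) / ((k : ℝ) + 1)) ^ (N + 1) * ‖y‖ := by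
            apply mul_le_mul_of_nonneg_right _ (norm_nonneg y)
            have := key2 (N + 1) (by omega) k
            simpa using this
    have hrw : ((k : ℝ) + 1) ^ ((N : ℝ) - 1 / 2)
        * ((C * ((N : ℝ) + 1) / ((k : ℝ) + 1)) ^ (N + 1) * ‖y‖)
        = K * (((k : ℝ) + 1) ^ ((N : ℝ) - 1 / 2) / ((k : ℝ) + 1) ^ (N + 1)) := by
      rw [hKdef, div_pow]
      ring
    calc ((k : ℝ) + 1) ^ ((N : ℝ) - 1 / 2) * ‖(T ^ k) (((1 - T) ^ N) x)‖
        ≤ ((k : ℝ) + 1) ^ ((N : ℝ) - 1 / 2)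
            * ((C * ((N : ℝ) + 1) / ((k : ℝ) + 1)) ^ (N + 1) * ‖y‖) := by
          apply mul_le_mul_of_nonneg_left hb (Real.rpow_nonneg hkpos.le _)
      _ = K * (((k : ℝ) + 1) ^ ((N : ℝ) - 1 / 2) / ((k : ℝ) + 1) ^ (N + 1)) := hrw
      _ = K * ((k : ℝ) + 1) ^ (-(3 / 2 : ℝ)) := by
          congr 1
          rw [← Real.rpow_natCast ((k : ℝ) + 1) (N + 1), ← Real.rpow_sub hkpos]
          congr 1
          push_cast
          ring
  have hsum : Summable fun k : ℕ => K * ((k : ℝ) + 1) ^ (-(3 / 2 : ℝ)) := by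
    apply Summable.mul_left
    have h0 : Summable fun n : ℕ => (n : ℝ) ^ (-(3 / 2 : ℝ)) :=
      Real.summable_nat_rpow.mpr (by norm_num)
    have := (summable_nat_add_iff 1).mpr h0
    simpa [Nat.cast_add] using this
  apply Summable.of_nonneg_of_le _ hcomp hsum
  intro k
  have hkpos : (0 : ℝ) < (k : ℝ) + 1 := by positivity
  exact mul_nonneg (Real.rpow_nonneg hkpos.le _) (norm_nonneg _)
end

section
/- Let (Ω, μ) be a measure space, 1 < p < ∞, and let T : L^p(Ω) → L^p(Ω) be an R-Ritt operator. Then for any positive integers α and β there exist constants 0 < c ≤ C such that c ‖x‖_{T,β} ≤ ‖x‖_{T,α} ≤ C ‖x‖_{T,β} for every x ∈ L^p(Ω) (an equivalence of quantities in [0, ∞]). -/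
open MeasureTheory
open scoped ENNReal NNReal

variable {Ω : Type*} [MeasurableSpace Ω] {μ : Measure Ω}

/-- A set `F` of bounded operators on `L^p(Ω)` is R-bounded: there is `C ≥ 0` such that for
all finite families `T_1, …, T_m` in `F` and `x_1, …, x_m` in `L^p`,
`‖(∑_k |T_k x_k|²)^{1/2}‖_p ≤ C ‖(∑_k |x_k|²)^{1/2}‖_p`. -/
def RBoundedSet (p : ℝ) [Fact (1 ≤ ENNReal.ofReal p)]
    (F : Set (Lp ℂ (ENNReal.ofReal p) μ →L[ℂ] Lp ℂ (ENNReal.ofReal p) μ)) : Prop :=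
  ∃ C : ℝ, 0 ≤ C ∧
    ∀ (m : ℕ) (S : Fin m → (Lp ℂ (ENNReal.ofReal p) μ →L[ℂ] Lp ℂ (ENNReal.ofReal p) μ)),
      (∀ k, S k ∈ F) → ∀ x : Fin m → Lp ℂ (ENNReal.ofReal p) μ,
        eLpNorm (fun ω => (∑ k, ‖(S k) (x k) ω‖ ^ 2) ^ (1 / 2 : ℝ)) (ENNReal.ofReal p) μ ≤
          ENNReal.ofReal C *
            eLpNorm (fun ω => (∑ k, ‖(x k) ω‖ ^ 2) ^ (1 / 2 : ℝ)) (ENNReal.ofReal p) μ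

/-- `T` is an R-Ritt operator: the set `{T^n : n ≥ 0} ∪ {n(T^n - T^{n-1}) : n ≥ 1}`
is R-bounded. -/
def RRitt (p : ℝ) [Fact (1 ≤ ENNReal.ofReal p)]
    (T : Lp ℂ (ENNReal.ofReal p) μ →L[ℂ] Lp ℂ (ENNReal.ofReal p) μ) : Prop :=
  RBoundedSet p ({A | ∃ n : ℕ, A = T ^ n} ∪
    {A | ∃ n : ℕ, 1 ≤ n ∧ A = (n : ℂ) • (T ^ n - T ^ (n - 1))})

/-- The square function `‖x‖_{T,α} = ‖(∑_{k≥1} k^{2α-1} |T^{k-1}(I-T)^α x|²)^{1/2}‖_{L^p}`,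
as a quantity in `[0,∞]` (computed as `(∫ (∑ ⋯)^{p/2})^{1/p}`, which is `∞` exactly when
the pointwise square function is not in `L^p`). -/
noncomputable def sqNorm (p : ℝ) [Fact (1 ≤ ENNReal.ofReal p)]
    (T : Lp ℂ (ENNReal.ofReal p) μ →L[ℂ] Lp ℂ (ENNReal.ofReal p) μ) (α : ℕ)
    (x : Lp ℂ (ENNReal.ofReal p) μ) : ℝ≥0∞ :=
  (∫⁻ ω, (∑' k : ℕ, ENNReal.ofReal (((k : ℝ) + 1) ^ (2 * (α : ℝ) - 1)) *
      (‖(T ^ k) (((1 - T) ^ α) x) ω‖₊ : ℝ≥0∞) ^ 2) ^ (p / 2) ∂μ) ^ (1 / p)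


namespace Stmt7Aux

section basic

-- Cauchy-Schwarz for ENNReal tsums
lemma cs (f g : ℕ → ℝ≥0∞) : (∑' i, f i * g i) ^ 2 ≤ (∑' i, f i ^ 2) * (∑' i, g i ^ 2) := by
  have hconj : Real.HolderConjugate 2 2 := ⟨by norm_num, by norm_num, by norm_num⟩
  have hf : AEMeasurable f (Measure.count : Measure ℕ) := measurable_from_nat.aemeasurable
  have hg : AEMeasurable g (Measure.count : Measure ℕ) := measurable_from_nat.aemeasurable
  have h := ENNReal.lintegral_mul_le_Lp_mul_Lq (Measure.count : Measure ℕ) hconj hf hg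
  rw [lintegral_count, lintegral_count, lintegral_count] at h
  have h2 : ∑' i, f i * g i ≤ (∑' i, f i ^ (2:ℝ)) ^ (1/2 : ℝ) * (∑' i, g i ^ (2:ℝ)) ^ (1/2:ℝ) := h
  calc (∑' i, f i * g i) ^ 2
      ≤ ((∑' i, f i ^ (2:ℝ)) ^ (1/2 : ℝ) * (∑' i, g i ^ (2:ℝ)) ^ (1/2:ℝ)) ^ 2 :=
        pow_le_pow_left' h2 2
    _ = (∑' i, f i ^ 2) * (∑' i, g i ^ 2) := by
        rw [mul_pow, ← ENNReal.rpow_natCast ((∑' i, f i ^ (2:ℝ)) ^ (1/2:ℝ)) 2,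
          ← ENNReal.rpow_natCast ((∑' i, g i ^ (2:ℝ)) ^ (1/2:ℝ)) 2,
          ← ENNReal.rpow_mul, ← ENNReal.rpow_mul]
        norm_num

-- swap lemma
lemma swap (A H : ℕ → ℝ≥0∞) :
    ∑' k, A k * ∑' i, H (k + i) ≤ ∑' j, (∑ k ∈ Finset.range (j+1), A k) * H j := by
  have inj : Function.Injective (fun z : ℕ × ℕ => (z.1 + z.2, z.1)) := by
    intro ⟨a,b⟩ ⟨c,d⟩ h
    simp only [Prod.mk.injEq] at h
    obtain ⟨h1, h2⟩ := h
    subst h2; simp_all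
  set G : ℕ × ℕ → ℝ≥0∞ := fun zj => if zj.2 ≤ zj.1 then A zj.2 * H zj.1 else 0 with hG
  calc ∑' k, A k * ∑' i, H (k + i)
      = ∑' k, ∑' i, A k * H (k + i) := by
        refine tsum_congr fun k => ?_; rw [ENNReal.tsum_mul_left]
    _ = ∑' z : ℕ × ℕ, G ((fun z : ℕ × ℕ => (z.1 + z.2, z.1)) z) := by
        rw [ENNReal.tsum_prod']
        refine tsum_congr fun k => tsum_congr fun i => ?_
        simp [hG, Nat.le_add_right]
    _ ≤ ∑' y : ℕ × ℕ, G y := ENNReal.tsum_comp_le_tsum_of_injective inj G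
    _ = ∑' j, ∑' k, G (j, k) := ENNReal.tsum_prod'
    _ = ∑' j, (∑ k ∈ Finset.range (j+1), A k) * H j := by
        refine tsum_congr fun j => ?_
        rw [tsum_eq_sum (s := Finset.range (j+1)) (by
          intro k hk
          simp only [Finset.mem_range, Nat.lt_succ_iff] at hk
          simp [hG, hk])]
        rw [Finset.sum_mul]
        refine Finset.sum_congr rfl fun k hk => ?_
        simp only [Finset.mem_range, Nat.lt_succ_iff] at hk
        simp [hG, hk]

-- pairing lemma
lemma pair (g : ℕ → ℝ≥0∞) (m : ℕ) :
    ∑ k ∈ Finset.range (2*m), g (k/2) = ∑ j ∈ Finset.range m, (g j + g j) := by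
  induction m with
  | zero => simp
  | succ m ih =>
      have h2 : 2 * (m+1) = (2*m) + 1 + 1 := by ring
      rw [h2, Finset.sum_range_succ, Finset.sum_range_succ, ih, Finset.sum_range_succ]
      have e1 : (2*m)/2 = m := by omega
      have e2 : (2*m+1)/2 = m := by omega
      rw [e1, e2]
      ring

section ops
variable {R : Type*} [Ring R] (T : R)

lemma op_id2 (k γ : ℕ) : T^k * (1-T)^(γ+1) = T^k * (1-T)^γ - T^(k+1) * (1-T)^γ := by
  rw [pow_succ' (1-T) γ, ← mul_assoc, mul_sub, mul_one, sub_mul, pow_succ]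

lemma op_id1 (a b γ : ℕ) :
    (T^(a+1) - T^a) * (T^b * (1-T)^γ) = -(T^(a+b) * (1-T)^(γ+1)) := by
  rw [op_id2 T (a+b) γ, sub_mul, ← mul_assoc, ← mul_assoc, ← pow_add, ← pow_add, neg_sub]
  congr 3
  omega

lemma op_id3 (k N γ : ℕ) (h : k ≤ N + 1) :
    ∑ j ∈ Finset.Ico k (N+1), T^j * (1-T)^(γ+1)
      = T^k * (1-T)^γ - T^(N+1) * (1-T)^γ := by
  have h0 : ∀ j, T^j * (1-T)^(γ+1)
      = (fun i => T^i * (1-T)^γ) j - (fun i => T^i * (1-T)^γ) (j+1) := fun j => op_id2 T j γ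
  calc ∑ j ∈ Finset.Ico k (N+1), T^j * (1-T)^(γ+1)
      = ∑ j ∈ Finset.Ico k (N+1), ((fun i => T^i * (1-T)^γ) j - (fun i => T^i * (1-T)^γ) (j+1)) :=
        Finset.sum_congr rfl fun j _ => h0 j
    _ = T^k * (1-T)^γ - T^(N+1) * (1-T)^γ := by
        rw [Finset.sum_Ico_eq_sub _ h, Finset.sum_range_sub', Finset.sum_range_sub']
        abel
end ops

lemma creal (α : ℕ) (j : ℕ) :
    ((((j:ℝ)+1) ^ ((2*(α:ℝ)+1)/2) / (((j - j/2 : ℕ):ℝ)+1)))^2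
      ≤ 2^(2*(α:ℝ)+1) * (((j/2 : ℕ):ℝ)+1)^(2*(α:ℝ)-1) := by
  set e : ℝ := 2*(α:ℝ)+1 with he
  have he0 : (0:ℝ) ≤ e := by positivity
  set x : ℝ := ((j/2 : ℕ):ℝ)+1 with hxdef
  have hx0 : (0:ℝ) < x := by positivity
  have ha : x ≤ (((j - j/2 : ℕ):ℝ)+1) := by
    have h1 : (j/2 : ℕ) ≤ j - j/2 := by omega
    simp only [hxdef]
    have := Nat.cast_le (α := ℝ).mpr h1
    linarith
  have ha0 : (0:ℝ) < (((j - j/2 : ℕ):ℝ)+1) := by positivity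
  have hj : ((j:ℝ)+1) ≤ 2*x := by
    have h1 : j ≤ 2*(j/2)+1 := by omega
    have := Nat.cast_le (α := ℝ).mpr h1
    push_cast at this
    simp only [hxdef]
    push_cast
    linarith
  have hnum : ((((j:ℝ)+1) ^ (e/2))^2 : ℝ) = ((j:ℝ)+1)^e := by
    rw [← Real.rpow_natCast (((j:ℝ)+1) ^ (e/2)) 2, ← Real.rpow_mul (by positivity)]
    norm_num
  have hnum2 : ((j:ℝ)+1)^e ≤ 2^e * x^e := by
    rw [← Real.mul_rpow (by norm_num) hx0.le]
    exact Real.rpow_le_rpow (by positivity) hj he0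
  have hden : x^2 ≤ (((j - j/2 : ℕ):ℝ)+1)^2 := pow_le_pow_left₀ hx0.le ha 2
  calc ((((j:ℝ)+1) ^ (e/2) / (((j - j/2 : ℕ):ℝ)+1)))^2
      = (((j:ℝ)+1) ^ (e/2))^2 / (((j - j/2 : ℕ):ℝ)+1)^2 := by rw [div_pow]
    _ ≤ (2^e * x^e) / x^2 := by
        refine div_le_div₀ (by positivity) (by rw [hnum]; exact hnum2) (by positivity) hden
    _ = 2^e * x^(e - 2) := by
        rw [Real.rpow_sub hx0, mul_div_assoc]
        congr 1
        rw [← Real.rpow_natCast x 2]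
        norm_num
    _ = 2^e * x^(2*(α:ℝ)-1) := by
        congr 1
        rw [he]
        ring_nf

end basic

section main

variable {Ω : Type*} [MeasurableSpace Ω] {μ : Measure Ω}
variable (p : ℝ) [Fact (1 ≤ ENNReal.ofReal p)]

/-- Transfer of a pointwise bound to the square norms. -/
lemma transfer (hp : 1 < p) {F1 F2 : Ω → ℝ≥0∞} {K : ℝ≥0∞} (hK : K ≠ ∞)
    (h : ∀ᵐ ω ∂μ, F1 ω ≤ K * F2 ω) :
    (∫⁻ ω, F1 ω ^ (p / 2) ∂μ) ^ (1 / p) ≤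
      K ^ (1 / 2 : ℝ) * (∫⁻ ω, F2 ω ^ (p / 2) ∂μ) ^ (1 / p) := by
  have hp0 : (0:ℝ) < p := lt_trans one_pos hp
  have h1 : (∫⁻ ω, F1 ω ^ (p / 2) ∂μ) ≤ K ^ (p / 2) * ∫⁻ ω, F2 ω ^ (p / 2) ∂μ := by
    rw [← MeasureTheory.lintegral_const_mul' _ _ (ENNReal.rpow_ne_top_of_nonneg (by positivity) hK)]
    refine lintegral_mono_ae (h.mono fun ω hω => ?_)
    rw [← ENNReal.mul_rpow_of_nonneg _ _ (by positivity : (0:ℝ) ≤ p/2)]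
    exact ENNReal.rpow_le_rpow hω (by positivity)
  have he : p / 2 * (1 / p) = (1 / 2 : ℝ) := by field_simp
  calc (∫⁻ ω, F1 ω ^ (p / 2) ∂μ) ^ (1 / p)
      ≤ (K ^ (p / 2) * ∫⁻ ω, F2 ω ^ (p / 2) ∂μ) ^ (1 / p) :=
        ENNReal.rpow_le_rpow h1 (by positivity)
    _ = K ^ (1 / 2 : ℝ) * (∫⁻ ω, F2 ω ^ (p / 2) ∂μ) ^ (1 / p) := by
        rw [ENNReal.mul_rpow_of_nonneg _ _ (by positivity : (0:ℝ) ≤ 1/p), ← ENNReal.rpow_mul, he]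

lemma coeFn_sum {ι : Type*} (s : Finset ι) (f : ι → Lp ℂ (ENNReal.ofReal p) μ) :
    ⇑(∑ i ∈ s, f i) =ᵐ[μ] fun ω => ∑ i ∈ s, f i ω := by
  classical
  induction s using Finset.induction_on with
  | empty => simp only [Finset.sum_empty]; exact Lp.coeFn_zero (E := ℂ) (p := ENNReal.ofReal p) (μ := μ)
  | insert a s hnot ih =>
      rw [Finset.sum_insert hnot]
      filter_upwards [Lp.coeFn_add (f a) (∑ i ∈ s, f i), ih] with ω h1 h2
      rw [Finset.sum_insert hnot, ← h2]
      simpa using h1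

lemma single_op {F : Set (Lp ℂ (ENNReal.ofReal p) μ →L[ℂ] Lp ℂ (ENNReal.ofReal p) μ)} {C : ℝ}
    (hC : ∀ (m : ℕ) (S : Fin m → (Lp ℂ (ENNReal.ofReal p) μ →L[ℂ] Lp ℂ (ENNReal.ofReal p) μ)),
      (∀ k, S k ∈ F) → ∀ x : Fin m → Lp ℂ (ENNReal.ofReal p) μ,
      eLpNorm (fun ω => (∑ k, ‖(S k) (x k) ω‖ ^ 2) ^ (1 / 2 : ℝ)) (ENNReal.ofReal p) μ ≤
        ENNReal.ofReal C * eLpNorm (fun ω => (∑ k, ‖(x k) ω‖ ^ 2) ^ (1 / 2 : ℝ)) (ENNReal.ofReal p) μ)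
    {S} (hS : S ∈ F) (y : Lp ℂ (ENNReal.ofReal p) μ) :
    eLpNorm (⇑(S y)) (ENNReal.ofReal p) μ ≤ ENNReal.ofReal C * eLpNorm (⇑y) (ENNReal.ofReal p) μ := by
  have h := hC 1 (fun _ => S) (fun _ => hS) (fun _ => y)
  have e : ∀ z : Lp ℂ (ENNReal.ofReal p) μ,
      (fun ω => (∑ _k : Fin 1, ‖z ω‖ ^ 2) ^ (1 / 2 : ℝ)) = fun ω => ‖z ω‖ := by
    intro z; funext ω
    rw [Fin.sum_univ_one, ← Real.rpow_natCast ‖z ω‖ 2, ← Real.rpow_mul (norm_nonneg _)]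
    norm_num
  rwa [e, e, eLpNorm_norm, eLpNorm_norm] at h

lemma bridge (hp : 1 < p) (m : ℕ) (g : ℕ → Ω → ℝ) (hg : ∀ k ω, 0 ≤ g k ω) :
    eLpNorm (fun ω => (∑ k : Fin m, (g k ω) ^ 2) ^ (1/2 : ℝ)) (ENNReal.ofReal p) μ
      = (∫⁻ ω, (∑ j ∈ Finset.range m, (ENNReal.ofReal (g j ω)) ^ 2) ^ (p/2) ∂μ) ^ (1/p) := by
  have hp0 : (0:ℝ) < p := lt_trans one_pos hp
  have hq0 : ENNReal.ofReal p ≠ 0 := by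
    simp only [ne_eq, ENNReal.ofReal_eq_zero, not_le]; linarith
  have hqt : ENNReal.ofReal p ≠ ⊤ := ENNReal.ofReal_ne_top
  rw [eLpNorm_eq_lintegral_rpow_enorm_toReal hq0 hqt, ENNReal.toReal_ofReal hp0.le]
  congr 1
  refine lintegral_congr fun ω => ?_
  have hsum : (0:ℝ) ≤ ∑ k : Fin m, (g ↑k ω)^2 := Finset.sum_nonneg fun k _ => sq_nonneg _
  have e1 : ENNReal.ofReal (∑ k : Fin m, (g ↑k ω)^2)
      = ∑ j ∈ Finset.range m, (ENNReal.ofReal (g j ω))^2 := by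
    rw [ENNReal.ofReal_sum_of_nonneg (fun k _ => sq_nonneg _)]
    rw [← Fin.sum_univ_eq_sum_range (fun j => (ENNReal.ofReal (g j ω))^2) m]
    exact Finset.sum_congr rfl fun k _ => ENNReal.ofReal_pow (hg _ _) 2
  rw [Real.enorm_eq_ofReal (Real.rpow_nonneg hsum _),
    ← ENNReal.ofReal_rpow_of_nonneg hsum (by norm_num : (0:ℝ) ≤ 1/2),
    ← ENNReal.rpow_mul, e1]
  congr 1
  ring

lemma gmct (hp : 1 < p) (v : ℕ → Lp ℂ (ENNReal.ofReal p) μ) (W' : ℕ → ℝ≥0∞) :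
    ∫⁻ ω, (∑' k, W' k * (‖v k ω‖₊ : ℝ≥0∞)^2) ^ (p/2) ∂μ
      = ⨆ m, ∫⁻ ω, (∑ k ∈ Finset.range m, W' k * (‖v k ω‖₊ : ℝ≥0∞)^2) ^ (p/2) ∂μ := by
  have hp0 : (0:ℝ) < p := lt_trans one_pos hp
  have hmeas : ∀ m, AEMeasurable
      (fun ω => (∑ k ∈ Finset.range m, W' k * (‖v k ω‖₊ : ℝ≥0∞)^2) ^ (p/2)) μ := by
    intro m
    exact (Finset.aemeasurable_fun_sum _ fun k _ =>
      (((Lp.aestronglyMeasurable (v k)).enorm.pow_const 2).const_mul (W' k))).pow_const (p/2)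
  have hpt : ∀ ω, (∑' k, W' k * (‖v k ω‖₊ : ℝ≥0∞)^2) ^ (p/2)
      = ⨆ m, (∑ k ∈ Finset.range m, W' k * (‖v k ω‖₊ : ℝ≥0∞)^2) ^ (p/2) := by
    intro ω
    rw [ENNReal.tsum_eq_iSup_nat]
    have h := OrderIso.map_iSup (ENNReal.orderIsoRpow (p/2) (by positivity))
      (fun m => ∑ k ∈ Finset.range m, W' k * (‖v k ω‖₊ : ℝ≥0∞)^2)
    simp only [ENNReal.orderIsoRpow_apply] at h
    exact h
  calc ∫⁻ ω, (∑' k, W' k * (‖v k ω‖₊ : ℝ≥0∞)^2) ^ (p/2) ∂μ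
      = ∫⁻ ω, ⨆ m, (∑ k ∈ Finset.range m, W' k * (‖v k ω‖₊ : ℝ≥0∞)^2) ^ (p/2) ∂μ :=
        lintegral_congr hpt
    _ = ⨆ m, ∫⁻ ω, (∑ k ∈ Finset.range m, W' k * (‖v k ω‖₊ : ℝ≥0∞)^2) ^ (p/2) ∂μ := by
        refine lintegral_iSup' hmeas (Filter.Eventually.of_forall fun ω => ?_)
        intro m m' h
        exact ENNReal.rpow_le_rpow (Finset.sum_le_sum_of_subset
          (Finset.range_subset_range.mpr h)) (by positivity)


lemma bridge2 (hp : 1 < p) (m : ℕ) (c : ℕ → ℝ) (hc : ∀ j, 0 ≤ c j)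
    (z : ℕ → Lp ℂ (ENNReal.ofReal p) μ) (b : ℕ → ℕ) :
    eLpNorm (fun ω => (∑ k : Fin m, (c ↑k * ‖z (b ↑k) ω‖) ^ 2) ^ (1/2 : ℝ)) (ENNReal.ofReal p) μ
      = (∫⁻ ω, (∑ j ∈ Finset.range m,
          ENNReal.ofReal ((c j)^2) * (‖z (b j) ω‖₊ : ℝ≥0∞)^2) ^ (p/2) ∂μ) ^ (1/p) := by
  rw [bridge p hp m (fun j ω => c j * ‖z (b j) ω‖) (fun j ω => mul_nonneg (hc j) (norm_nonneg _))]
  congr 1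
  refine lintegral_congr fun ω => ?_
  congr 1
  refine Finset.sum_congr rfl fun j _ => ?_
  rw [ENNReal.ofReal_mul (hc j), mul_pow, ← ENNReal.ofReal_pow (hc j)]
  congr 1
  rw [ofReal_norm, enorm_eq_nnnorm]

/-- `uu p T α x j = T^j ((1-T)^α x)`. -/
noncomputable def uu (T : Lp ℂ (ENNReal.ofReal p) μ →L[ℂ] Lp ℂ (ENNReal.ofReal p) μ)
    (α : ℕ) (x : Lp ℂ (ENNReal.ofReal p) μ) (j : ℕ) : Lp ℂ (ENNReal.ofReal p) μ :=
  (T^j) (((1-T)^α) x)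

lemma uu_mul (T : Lp ℂ (ENNReal.ofReal p) μ →L[ℂ] Lp ℂ (ENNReal.ofReal p) μ)
    (α : ℕ) (x : Lp ℂ (ENNReal.ofReal p) μ) (j : ℕ) :
    uu p T α x j = (T^j * (1-T)^α) x := rfl

lemma sqNorm_uu (T : Lp ℂ (ENNReal.ofReal p) μ →L[ℂ] Lp ℂ (ENNReal.ofReal p) μ)
    (α : ℕ) (x : Lp ℂ (ENNReal.ofReal p) μ) :
    sqNorm p T α x = (∫⁻ ω, (∑' k : ℕ, ENNReal.ofReal (((k:ℝ)+1) ^ (2*(α:ℝ)-1)) *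
      (‖uu p T α x k ω‖₊ : ℝ≥0∞)^2) ^ (p/2) ∂μ) ^ (1/p) := rfl

lemma stepA (hp : 1 < p) (T : Lp ℂ (ENNReal.ofReal p) μ →L[ℂ] Lp ℂ (ENNReal.ofReal p) μ)
    (hT : RRitt p T) (α : ℕ) :
    ∃ C : ℝ, 0 < C ∧ ∀ x, sqNorm p T (α+1) x ≤ ENNReal.ofReal C * sqNorm p T α x := by
  obtain ⟨C, hC0, hC⟩ := hT
  have hp0 : (0:ℝ) < p := lt_trans one_pos hp
  refine ⟨(C+1) * (2:ℝ)^(2*(α:ℝ)+2), by positivity, fun x => ?_⟩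
  set γ : ℕ → ℝ := fun j => ((j:ℝ)+1) ^ ((2*(α:ℝ)+1)/2) with hγdef
  have hγ0 : ∀ j, 0 ≤ γ j := fun j => by simp only [hγdef]; positivity
  set cc : ℕ → ℝ := fun j => γ j / (((j - j/2 : ℕ):ℝ)+1) with hccdef
  have hcc0 : ∀ j, 0 ≤ cc j := fun j => by
    simp only [hccdef, hγdef]
    positivity
  have hγsq : ∀ j, (γ j)^2 = ((j:ℝ)+1) ^ (2*(((α+1):ℕ):ℝ)-1) := by
    intro j
    simp only [hγdef]
    rw [← Real.rpow_natCast (((j:ℝ)+1) ^ ((2*(α:ℝ)+1)/2)) 2, ← Real.rpow_mul (by positivity)]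
    congr 1
    push_cast
    ring
  set K : ℝ≥0∞ := ENNReal.ofReal ((2:ℝ)^(2*(α:ℝ)+2)) with hKdef
  have hKt : K ≠ ⊤ := ENNReal.ofReal_ne_top
  -- pointwise estimate used for the right-hand side
  have hptw : ∀ m : ℕ, ∀ ω,
      ∑ j ∈ Finset.range m, ENNReal.ofReal ((cc j)^2) * (‖uu p T α x (j/2) ω‖₊ : ℝ≥0∞)^2
        ≤ K * ∑' k : ℕ, ENNReal.ofReal (((k:ℝ)+1) ^ (2*(α:ℝ)-1)) *
            (‖uu p T α x k ω‖₊ : ℝ≥0∞)^2 := by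
    intro m ω
    set g : ℕ → ℝ≥0∞ :=
      fun i => ENNReal.ofReal (((i:ℝ)+1) ^ (2*(α:ℝ)-1)) * (‖uu p T α x i ω‖₊ : ℝ≥0∞)^2 with hgdef
    have hterm : ∀ j, ENNReal.ofReal ((cc j)^2) * (‖uu p T α x (j/2) ω‖₊ : ℝ≥0∞)^2
        ≤ ENNReal.ofReal ((2:ℝ)^(2*(α:ℝ)+1)) * g (j/2) := by
      intro j
      have h1 : ENNReal.ofReal ((cc j)^2)
          ≤ ENNReal.ofReal ((2:ℝ)^(2*(α:ℝ)+1) * (((j/2 : ℕ):ℝ)+1) ^ (2*(α:ℝ)-1)) :=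
        ENNReal.ofReal_le_ofReal (creal α j)
      rw [ENNReal.ofReal_mul (by positivity)] at h1
      calc ENNReal.ofReal ((cc j)^2) * (‖uu p T α x (j/2) ω‖₊ : ℝ≥0∞)^2
          ≤ (ENNReal.ofReal ((2:ℝ)^(2*(α:ℝ)+1)) *
              ENNReal.ofReal ((((j/2 : ℕ):ℝ)+1) ^ (2*(α:ℝ)-1))) *
                (‖uu p T α x (j/2) ω‖₊ : ℝ≥0∞)^2 :=
            mul_le_mul_left h1 _
        _ = ENNReal.ofReal ((2:ℝ)^(2*(α:ℝ)+1)) * g (j/2) := by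
            rw [hgdef, mul_assoc]
    calc ∑ j ∈ Finset.range m, ENNReal.ofReal ((cc j)^2) * (‖uu p T α x (j/2) ω‖₊ : ℝ≥0∞)^2
        ≤ ∑ j ∈ Finset.range m, ENNReal.ofReal ((2:ℝ)^(2*(α:ℝ)+1)) * g (j/2) :=
          Finset.sum_le_sum fun j _ => hterm j
      _ = ENNReal.ofReal ((2:ℝ)^(2*(α:ℝ)+1)) * ∑ j ∈ Finset.range m, g (j/2) := by
          rw [Finset.mul_sum]
      _ ≤ ENNReal.ofReal ((2:ℝ)^(2*(α:ℝ)+1)) * ∑ j ∈ Finset.range (2*m), g (j/2) :=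
          mul_le_mul_right (Finset.sum_le_sum_of_subset
            (Finset.range_subset_range.mpr (by omega))) _
      _ = ENNReal.ofReal ((2:ℝ)^(2*(α:ℝ)+1)) * ∑ j ∈ Finset.range m, (g j + g j) := by
          rw [pair]
      _ = ENNReal.ofReal ((2:ℝ)^(2*(α:ℝ)+1)) * (2 * ∑ j ∈ Finset.range m, g j) := by
          rw [Finset.sum_add_distrib, ← two_mul]
      _ ≤ ENNReal.ofReal ((2:ℝ)^(2*(α:ℝ)+1)) * (2 * ∑' j : ℕ, g j) :=
          mul_le_mul_right (mul_le_mul_right (ENNReal.sum_le_tsum _) _) _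
      _ = K * ∑' j : ℕ, g j := by
          rw [← mul_assoc]
          congr 1
          have h2 : (2:ℝ)^(2*(α:ℝ)+2) = 2^(2*(α:ℝ)+1) * 2 := by
            rw [show 2*(α:ℝ)+2 = (2*(α:ℝ)+1)+1 by ring,
              Real.rpow_add (by norm_num : (0:ℝ) < 2), Real.rpow_one]
          rw [hKdef, h2, ENNReal.ofReal_mul (by positivity), ENNReal.ofReal_ofNat]
  -- the main per-m estimate
  have key : ∀ m : ℕ,
      (∫⁻ ω, (∑ j ∈ Finset.range m,
          ENNReal.ofReal ((γ j)^2) * (‖uu p T (α+1) x j ω‖₊ : ℝ≥0∞)^2) ^ (p/2) ∂μ) ^ (1/p)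
        ≤ ENNReal.ofReal C * (K ^ (1/2 : ℝ) * sqNorm p T α x) := by
    intro m
    set S : Fin m → (Lp ℂ (ENNReal.ofReal p) μ →L[ℂ] Lp ℂ (ENNReal.ofReal p) μ) :=
      fun k => (((↑k : ℕ) - (↑k : ℕ)/2 + 1 : ℕ) : ℂ) •
        (T^((↑k : ℕ) - (↑k : ℕ)/2 + 1) - T^((↑k : ℕ) - (↑k : ℕ)/2)) with hSdef
    have hS : ∀ k, S k ∈ ({A | ∃ n : ℕ, A = T ^ n} ∪
        {A | ∃ n : ℕ, 1 ≤ n ∧ A = (n : ℂ) • (T ^ n - T ^ (n - 1))}) := by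
      intro k
      exact Or.inr ⟨(↑k : ℕ) - (↑k : ℕ)/2 + 1, by omega, by rw [Nat.add_sub_cancel]⟩
    set xx : Fin m → Lp ℂ (ENNReal.ofReal p) μ :=
      fun k => ((cc ↑k : ℝ) : ℂ) • uu p T α x ((↑k : ℕ)/2) with hxxdef
    have hI := hC m S hS xx
    have hSx : ∀ k : Fin m, S k (xx k) = ((-(γ ↑k) : ℝ) : ℂ) • uu p T (α+1) x ↑k := by
      intro k
      have hb : (↑k : ℕ) - (↑k : ℕ)/2 + (↑k : ℕ)/2 = (↑k : ℕ) := by omega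
      have h1 : (T^((↑k : ℕ) - (↑k : ℕ)/2 + 1) - T^((↑k : ℕ) - (↑k : ℕ)/2))
            (uu p T α x ((↑k : ℕ)/2))
          = -(uu p T (α+1) x ↑k) := by
        rw [uu_mul, ← ContinuousLinearMap.mul_apply, op_id1, hb, ContinuousLinearMap.neg_apply]
        rw [uu_mul]
      have hscal : (((↑k : ℕ) - (↑k : ℕ)/2 + 1 : ℕ) : ℂ) * ((cc ↑k : ℝ) : ℂ)
          = ((γ ↑k : ℝ) : ℂ) := by
        have hr : (((↑k : ℕ) - (↑k : ℕ)/2 + 1 : ℕ) : ℝ) * cc ↑k = γ ↑k := by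
          simp only [hccdef]
          have hne : ((((↑k : ℕ) - (↑k : ℕ)/2 : ℕ)):ℝ) + 1 ≠ 0 := by positivity
          push_cast
          field_simp
        rw [← hr]
        push_cast
        ring
      rw [hSdef]
      simp only [ContinuousLinearMap.smul_apply, hxxdef]
      rw [ContinuousLinearMap.map_smul, h1, smul_smul, hscal, smul_neg, ← neg_smul]
      congr 1
      push_cast
      ring
    have hae : ∀ᵐ ω ∂μ, ∀ k : Fin m,
        ‖(S k) (xx k) ω‖ = γ ↑k * ‖uu p T (α+1) x ↑k ω‖ ∧
          ‖(xx k) ω‖ = cc ↑k * ‖uu p T α x ((↑k : ℕ)/2) ω‖ := by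
      rw [MeasureTheory.ae_all_iff]
      intro k
      filter_upwards [Lp.coeFn_smul ((-(γ ↑k) : ℝ) : ℂ) (uu p T (α+1) x ↑k),
        Lp.coeFn_smul ((cc ↑k : ℝ) : ℂ) (uu p T α x ((↑k : ℕ)/2))] with ω h1 h2
      constructor
      · rw [hSx k, h1]
        simp only [Pi.smul_apply, norm_smul, Complex.norm_real, Real.norm_eq_abs,
          abs_neg, abs_of_nonneg (hγ0 ↑k)]
      · rw [hxxdef]
        rw [h2]
        simp only [Pi.smul_apply, norm_smul, Complex.norm_real, Real.norm_eq_abs,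
          abs_of_nonneg (hcc0 ↑k)]
    have hEL : eLpNorm (fun ω => (∑ k : Fin m, ‖(S k) (xx k) ω‖ ^ 2) ^ (1/2 : ℝ))
        (ENNReal.ofReal p) μ
        = (∫⁻ ω, (∑ j ∈ Finset.range m,
            ENNReal.ofReal ((γ j)^2) * (‖uu p T (α+1) x j ω‖₊ : ℝ≥0∞)^2) ^ (p/2) ∂μ) ^ (1/p) := by
      rw [eLpNorm_congr_ae
        (g := fun ω => (∑ k : Fin m, (γ ↑k * ‖uu p T (α+1) x ↑k ω‖) ^ 2) ^ (1/2 : ℝ))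
        (by filter_upwards [hae] with ω hω
            congr 1
            exact Finset.sum_congr rfl fun k _ => by rw [(hω k).1])]
      exact bridge2 p hp m γ hγ0 (uu p T (α+1) x) id
    have hER : eLpNorm (fun ω => (∑ k : Fin m, ‖(xx k) ω‖ ^ 2) ^ (1/2 : ℝ))
        (ENNReal.ofReal p) μ
        = (∫⁻ ω, (∑ j ∈ Finset.range m,
            ENNReal.ofReal ((cc j)^2) * (‖uu p T α x (j/2) ω‖₊ : ℝ≥0∞)^2) ^ (p/2) ∂μ) ^ (1/p) := by
      rw [eLpNorm_congr_ae
        (g := fun ω => (∑ k : Fin m, (cc ↑k * ‖uu p T α x ((↑k : ℕ)/2) ω‖) ^ 2) ^ (1/2 : ℝ))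
        (by filter_upwards [hae] with ω hω
            congr 1
            exact Finset.sum_congr rfl fun k _ => by rw [(hω k).2])]
      exact bridge2 p hp m cc hcc0 (uu p T α x) (fun j => j/2)
    have hRbound : (∫⁻ ω, (∑ j ∈ Finset.range m,
          ENNReal.ofReal ((cc j)^2) * (‖uu p T α x (j/2) ω‖₊ : ℝ≥0∞)^2) ^ (p/2) ∂μ) ^ (1/p)
        ≤ K ^ (1/2 : ℝ) * sqNorm p T α x := by
      rw [sqNorm_uu]
      exact transfer p hp (μ := μ) hKt (Filter.Eventually.of_forall (hptw m))
    calc (∫⁻ ω, (∑ j ∈ Finset.range m,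
          ENNReal.ofReal ((γ j)^2) * (‖uu p T (α+1) x j ω‖₊ : ℝ≥0∞)^2) ^ (p/2) ∂μ) ^ (1/p)
        = eLpNorm (fun ω => (∑ k : Fin m, ‖(S k) (xx k) ω‖ ^ 2) ^ (1/2 : ℝ))
            (ENNReal.ofReal p) μ := hEL.symm
      _ ≤ ENNReal.ofReal C *
            eLpNorm (fun ω => (∑ k : Fin m, ‖(xx k) ω‖ ^ 2) ^ (1/2 : ℝ))
              (ENNReal.ofReal p) μ := hI
      _ = ENNReal.ofReal C * (∫⁻ ω, (∑ j ∈ Finset.range m,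
            ENNReal.ofReal ((cc j)^2) * (‖uu p T α x (j/2) ω‖₊ : ℝ≥0∞)^2) ^ (p/2) ∂μ) ^ (1/p) := by
          rw [hER]
      _ ≤ ENNReal.ofReal C * (K ^ (1/2 : ℝ) * sqNorm p T α x) := mul_le_mul_right hRbound _
  -- assemble
  have hsq : sqNorm p T (α+1) x
      = (∫⁻ ω, (∑' k : ℕ, ENNReal.ofReal ((γ k)^2) *
          (‖uu p T (α+1) x k ω‖₊ : ℝ≥0∞)^2) ^ (p/2) ∂μ) ^ (1/p) := by
    rw [sqNorm_uu]
    refine congrArg (· ^ (1/p)) (lintegral_congr fun ω => congrArg (· ^ (p/2))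
      (tsum_congr fun k => ?_))
    rw [hγsq k]
  rw [hsq, gmct p hp (uu p T (α+1) x) (fun k => ENNReal.ofReal ((γ k)^2))]
  have hiSup := OrderIso.map_iSup (ENNReal.orderIsoRpow (1/p) (by positivity))
    (fun m => ∫⁻ ω, (∑ k ∈ Finset.range m,
      ENNReal.ofReal ((γ k)^2) * (‖uu p T (α+1) x k ω‖₊ : ℝ≥0∞)^2) ^ (p/2) ∂μ)
  simp only [ENNReal.orderIsoRpow_apply] at hiSup
  rw [hiSup]
  refine le_trans (iSup_le key) ?_
  rw [← mul_assoc]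
  refine mul_le_mul_left ?_ _
  have hK1 : (1:ℝ≥0∞) ≤ K := by
    rw [hKdef]
    exact ENNReal.one_le_ofReal.mpr (Real.one_le_rpow one_le_two (by positivity))
  calc ENNReal.ofReal C * K ^ (1/2 : ℝ)
      ≤ ENNReal.ofReal C * K := by
        refine mul_le_mul_right ?_ _
        have h3 := ENNReal.rpow_le_rpow_of_exponent_le hK1 (by norm_num : (1/2 : ℝ) ≤ 1)
        rwa [ENNReal.rpow_one] at h3
    _ = ENNReal.ofReal (C * (2:ℝ)^(2*(α:ℝ)+2)) := by
        rw [hKdef, ENNReal.ofReal_mul hC0]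
    _ ≤ ENNReal.ofReal ((C+1) * (2:ℝ)^(2*(α:ℝ)+2)) := by
        refine ENNReal.ofReal_le_ofReal ?_
        have h2 : (0:ℝ) ≤ (2:ℝ)^(2*(α:ℝ)+2) := by positivity
        nlinarith

set_option maxHeartbeats 1000000 in
lemma stepB (hp : 1 < p) (T : Lp ℂ (ENNReal.ofReal p) μ →L[ℂ] Lp ℂ (ENNReal.ofReal p) μ)
    (hT : RRitt p T) (α : ℕ) (hα : 1 ≤ α) :
    ∀ x, sqNorm p T α x ≤ ENNReal.ofReal 2 * sqNorm p T (α+1) x := by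
  obtain ⟨γ0, rfl⟩ : ∃ γ0, α = γ0 + 1 := ⟨α-1, by omega⟩
  obtain ⟨C, hC0, hC⟩ := hT
  intro x
  have hp0 : (0:ℝ) < p := lt_trans one_pos hp
  have hq0 : ENNReal.ofReal p ≠ 0 := by
    simp only [ne_eq, ENNReal.ofReal_eq_zero, not_le]; linarith
  have hqt : ENNReal.ofReal p ≠ ⊤ := ENNReal.ofReal_ne_top
  set z : Lp ℂ (ENNReal.ofReal p) μ := ((1-T)^γ0) x with hzdef
  set M : ℝ≥0∞ := eLpNorm (⇑z) (ENNReal.ofReal p) μ with hMdef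
  -- decay of u (N+1)
  have hdecay : ∀ N : ℕ, eLpNorm (⇑(uu p T (γ0+1) x (N+1))) (ENNReal.ofReal p) μ
      ≤ ENNReal.ofReal (((N:ℝ)+2)⁻¹) * (ENNReal.ofReal C * M) := by
    intro N
    set S : Lp ℂ (ENNReal.ofReal p) μ →L[ℂ] Lp ℂ (ENNReal.ofReal p) μ :=
      ((N+2 : ℕ) : ℂ) • (T^(N+2) - T^(N+1)) with hSdef
    have hmem : S ∈ ({A | ∃ n : ℕ, A = T ^ n} ∪
        {A | ∃ n : ℕ, 1 ≤ n ∧ A = (n : ℂ) • (T ^ n - T ^ (n - 1))}) :=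
      Or.inr ⟨N+2, by omega, by rw [hSdef]; norm_num⟩
    have hzi : (T^(N+2) - T^(N+1)) z = -(uu p T (γ0+1) x (N+1)) := by
      have h1 : uu p T (γ0+1) x (N+1) = ((T^(N+1) - T^(N+2)) * (1-T)^γ0) x := by
        rw [uu_mul, op_id2 T (N+1) γ0, sub_mul, ← show N+1+1 = N+2 from rfl]
      rw [h1, ContinuousLinearMap.mul_apply, ContinuousLinearMap.sub_apply,
        ContinuousLinearMap.sub_apply, hzdef]
      abel
    have hu1 : uu p T (γ0+1) x (N+1) = ((-(((N:ℝ)+2)⁻¹)) : ℂ) • (S z) := by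
      rw [hSdef, ContinuousLinearMap.smul_apply, hzi, smul_neg, smul_neg, smul_smul]
      rw [← neg_smul]
      have : -(((-(((N:ℝ)+2)⁻¹)) : ℂ) * ((N+2 : ℕ) : ℂ)) = 1 := by
        have hne : ((N:ℂ)+2) ≠ 0 := by
          exact_mod_cast (Nat.cast_ne_zero (R := ℂ)).2 (by omega : N+2 ≠ 0)
        push_cast
        field_simp
      rw [this, one_smul]
    calc eLpNorm (⇑(uu p T (γ0+1) x (N+1))) (ENNReal.ofReal p) μ
        = eLpNorm (((-(((N:ℝ)+2)⁻¹)) : ℂ) • ⇑(S z)) (ENNReal.ofReal p) μ := by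
          rw [hu1]
          exact eLpNorm_congr_ae (Lp.coeFn_smul _ _)
      _ = ‖((-(((N:ℝ)+2)⁻¹)) : ℂ)‖₊ * eLpNorm (⇑(S z)) (ENNReal.ofReal p) μ :=
          eLpNorm_const_smul _ _ _ _
      _ ≤ ENNReal.ofReal (((N:ℝ)+2)⁻¹) * (ENNReal.ofReal C * M) := by
          refine mul_le_mul ?_ (single_op p hC hmem z) zero_le zero_le
          rw [← enorm_eq_nnnorm, ← ofReal_norm]
          refine le_of_eq (congrArg _ ?_)
          rw [norm_neg, Complex.norm_real]
          rw [Real.norm_eq_abs, abs_of_nonneg (by positivity)]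
  -- summability of the p-th powers
  have hmeasN : ∀ N : ℕ, AEMeasurable
      (fun ω => (‖uu p T (γ0+1) x (N+1) ω‖₊ : ℝ≥0∞) ^ p) μ :=
    fun N => ((Lp.aestronglyMeasurable (uu p T (γ0+1) x (N+1))).enorm).pow_const p
  have hsum : ∑' N : ℕ, ∫⁻ ω, (‖uu p T (γ0+1) x (N+1) ω‖₊ : ℝ≥0∞) ^ p ∂μ ≠ ⊤ := by
    have hint : ∀ N : ℕ, ∫⁻ ω, (‖uu p T (γ0+1) x (N+1) ω‖₊ : ℝ≥0∞) ^ p ∂μ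
        = (eLpNorm (⇑(uu p T (γ0+1) x (N+1))) (ENNReal.ofReal p) μ) ^ p := by
      intro N
      rw [eLpNorm_eq_lintegral_rpow_enorm_toReal hq0 hqt, ENNReal.toReal_ofReal hp0.le, one_div,
        ENNReal.rpow_inv_rpow (ne_of_gt hp0)]
      simp only [enorm_eq_nnnorm]
    have hD : (ENNReal.ofReal C * M) ^ p ≠ ⊤ := by
      refine ENNReal.rpow_ne_top_of_nonneg hp0.le ?_
      exact ENNReal.mul_ne_top ENNReal.ofReal_ne_top (Lp.eLpNorm_ne_top z)
    have hbound : ∀ N : ℕ, ∫⁻ ω, (‖uu p T (γ0+1) x (N+1) ω‖₊ : ℝ≥0∞) ^ p ∂μ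
        ≤ ENNReal.ofReal ((((N:ℝ)+2)⁻¹) ^ p) * (ENNReal.ofReal C * M) ^ p := by
      intro N
      rw [hint N, ← ENNReal.ofReal_rpow_of_nonneg (by positivity) hp0.le,
        ← ENNReal.mul_rpow_of_nonneg _ _ hp0.le]
      exact ENNReal.rpow_le_rpow (hdecay N) hp0.le
    have hsummable : Summable (fun N : ℕ => (((N:ℝ)+2)⁻¹) ^ p) := by
      have h1 : Summable (fun n : ℕ => 1 / (n:ℝ) ^ p) := Real.summable_one_div_nat_rpow.2 hp
      have h2 := h1.comp_injective (add_left_injective 2)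
      refine h2.congr fun N => ?_
      simp only [Function.comp_apply]
      rw [Real.inv_rpow (by positivity), one_div]
      push_cast
      ring_nf
    have hcalc : _ ≤ ENNReal.ofReal (∑' N : ℕ, (((N:ℝ)+2)⁻¹) ^ p) * (ENNReal.ofReal C * M) ^ p :=
      calc ∑' N : ℕ, ∫⁻ ω, (‖uu p T (γ0+1) x (N+1) ω‖₊ : ℝ≥0∞) ^ p ∂μ
        ≤ ∑' N : ℕ, ENNReal.ofReal ((((N:ℝ)+2)⁻¹) ^ p) * (ENNReal.ofReal C * M) ^ p :=
          ENNReal.tsum_le_tsum hbound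
      _ = (∑' N : ℕ, ENNReal.ofReal ((((N:ℝ)+2)⁻¹) ^ p)) * (ENNReal.ofReal C * M) ^ p :=
          ENNReal.tsum_mul_right
      _ = ENNReal.ofReal (∑' N : ℕ, (((N:ℝ)+2)⁻¹) ^ p) * (ENNReal.ofReal C * M) ^ p := by
          rw [ENNReal.ofReal_tsum_of_nonneg (fun N => by positivity) hsummable]
    exact ne_top_of_le_ne_top (ENNReal.mul_ne_top ENNReal.ofReal_ne_top hD) hcalc
  -- a.e. convergence to 0
  have htend0 : ∀ᵐ ω ∂μ, Filter.Tendsto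
      (fun N => (‖uu p T (γ0+1) x (N+1) ω‖₊ : ℝ≥0∞)) Filter.atTop (nhds 0) := by
    have h2 : ∀ᵐ ω ∂μ, ∑' N : ℕ, (‖uu p T (γ0+1) x (N+1) ω‖₊ : ℝ≥0∞) ^ p < ⊤ := by
      refine ae_lt_top' (AEMeasurable.ennreal_tsum hmeasN) ?_
      rw [lintegral_tsum hmeasN]
      exact hsum
    filter_upwards [h2] with ω hω
    have h3 := ENNReal.tendsto_atTop_zero_of_tsum_ne_top hω.ne
    have h4 := (ENNReal.continuous_rpow_const (y := p⁻¹)).tendsto (0 : ℝ≥0∞)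
    have h5 := h4.comp h3
    rw [show ((0:ℝ≥0∞) ^ (p⁻¹ : ℝ)) = 0 from ENNReal.zero_rpow_of_pos (by positivity)] at h5
    refine h5.congr fun N => ?_
    simp only [Function.comp_apply]
    rw [ENNReal.rpow_rpow_inv (ne_of_gt hp0)]
  -- a.e. telescoping identities
  have hid : ∀ k N : ℕ, k ≤ N+1 →
      (∑ j ∈ Finset.Ico k (N+1), uu p T (γ0+1+1) x j) + uu p T (γ0+1) x (N+1)
        = uu p T (γ0+1) x k := by
    intro k N h
    have h3 := op_id3 T k N (γ0+1) h
    have h4 := congrArg (fun (A : Lp ℂ (ENNReal.ofReal p) μ →L[ℂ] Lp ℂ (ENNReal.ofReal p) μ)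
      => A x) h3
    simp only [ContinuousLinearMap.sum_apply, ContinuousLinearMap.sub_apply] at h4
    have h5 : ∀ j, (T^j * (1-T)^(γ0+1+1)) x = uu p T (γ0+1+1) x j := fun j => rfl
    have h6 : ∀ j, (T^j * (1-T)^(γ0+1)) x = uu p T (γ0+1) x j := fun j => rfl
    simp only [h5, h6] at h4
    rw [h4]
    abel
  have hcoe : ∀ k N : ℕ, ∀ᵐ ω ∂μ, k ≤ N+1 →
      uu p T (γ0+1) x k ω = (∑ j ∈ Finset.Ico k (N+1), uu p T (γ0+1+1) x j ω)
        + uu p T (γ0+1) x (N+1) ω := by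
    intro k N
    by_cases h : k ≤ N+1
    · filter_upwards [Lp.coeFn_add (∑ j ∈ Finset.Ico k (N+1), uu p T (γ0+1+1) x j)
        (uu p T (γ0+1) x (N+1)),
        coeFn_sum p (Finset.Ico k (N+1)) (fun j => uu p T (γ0+1+1) x j)] with ω h1 h2
      intro _
      rw [← hid k N h, h1]
      simp only [Pi.add_apply]
      rw [h2]
    · exact Filter.Eventually.of_forall fun ω h' => absurd h' h
  -- tail estimates for the weights
  set w : ℕ → ℝ≥0∞ := fun j => ENNReal.ofReal (((j:ℝ)+1) * ((j:ℝ)+2)) with hwdef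
  have hw0 : ∀ j, w j ≠ 0 := fun j => by
    simp only [hwdef]
    exact (ENNReal.ofReal_pos.2 (by positivity)).ne'
  have hwt : ∀ j, w j ≠ ⊤ := fun j => ENNReal.ofReal_ne_top
  have htail : ∀ k : ℕ, ∑' i : ℕ, (w (k+i))⁻¹ ≤ ENNReal.ofReal (((k:ℝ)+1)⁻¹) := by
    intro k
    have hreal : ∀ n : ℕ, ∑ i ∈ Finset.range n, ((((k+i:ℕ):ℝ)+1) * (((k+i:ℕ):ℝ)+2))⁻¹
        = ((k:ℝ)+1)⁻¹ - (((k+n:ℕ):ℝ)+1)⁻¹ := by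
      intro n
      induction n with
      | zero => simp
      | succ n ih =>
          rw [Finset.sum_range_succ, ih]
          have h1 : ((k:ℝ)+(n:ℝ)+1) ≠ 0 := by positivity
          have h2 : ((k:ℝ)+(n:ℝ)+2) ≠ 0 := by positivity
          push_cast
          field_simp
          ring
    rw [ENNReal.tsum_eq_iSup_nat]
    refine iSup_le fun n => ?_
    have he : ∀ i : ℕ, (w (k+i))⁻¹
        = ENNReal.ofReal (((((k+i:ℕ):ℝ)+1) * (((k+i:ℕ):ℝ)+2))⁻¹) := by
      intro i
      simp only [hwdef]
      rw [ENNReal.ofReal_inv_of_pos (by positivity)]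
    calc ∑ i ∈ Finset.range n, (w (k+i))⁻¹
        = ENNReal.ofReal (∑ i ∈ Finset.range n, ((((k+i:ℕ):ℝ)+1) * (((k+i:ℕ):ℝ)+2))⁻¹) := by
          rw [ENNReal.ofReal_sum_of_nonneg (fun i _ => by positivity)]
          exact Finset.sum_congr rfl fun i _ => he i
      _ ≤ ENNReal.ofReal (((k:ℝ)+1)⁻¹) := by
          refine ENNReal.ofReal_le_ofReal ?_
          rw [hreal n]
          have h3 : 0 ≤ (((k+n:ℕ):ℝ)+1)⁻¹ := by positivity
          linarith
  -- main pointwise bound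
  have hmain : ∀ᵐ ω ∂μ,
      (∑' k : ℕ, ENNReal.ofReal (((k:ℝ)+1) ^ (2*(((γ0+1):ℕ):ℝ)-1)) *
          (‖uu p T (γ0+1) x k ω‖₊ : ℝ≥0∞)^2)
        ≤ 2 * (∑' k : ℕ, ENNReal.ofReal (((k:ℝ)+1) ^ (2*(((γ0+1+1):ℕ):ℝ)-1)) *
          (‖uu p T (γ0+1+1) x k ω‖₊ : ℝ≥0∞)^2) := by
    have hallcoe : ∀ᵐ ω ∂μ, ∀ k N : ℕ, k ≤ N+1 → uu p T (γ0+1) x k ω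
        = (∑ j ∈ Finset.Ico k (N+1), uu p T (γ0+1+1) x j ω) + uu p T (γ0+1) x (N+1) ω :=
      MeasureTheory.ae_all_iff.2 fun k => MeasureTheory.ae_all_iff.2 fun N => hcoe k N
    filter_upwards [htend0, hallcoe] with ω h0 hidω
    set n : ℕ → ℝ≥0∞ := fun j => (‖uu p T (γ0+1+1) x j ω‖₊ : ℝ≥0∞) with hndef
    -- step 1: pointwise tail bound
    have hk : ∀ k : ℕ, (‖uu p T (γ0+1) x k ω‖₊ : ℝ≥0∞) ≤ ∑' i : ℕ, n (k+i) := by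
      intro k
      have hlim : Filter.Tendsto
          (fun N => (∑' i : ℕ, n (k+i)) + (‖uu p T (γ0+1) x (N+1) ω‖₊ : ℝ≥0∞))
          Filter.atTop (nhds ((∑' i : ℕ, n (k+i)) + 0)) := Filter.Tendsto.const_add _ h0
      rw [add_zero] at hlim
      refine ge_of_tendsto hlim ?_
      refine Filter.eventually_atTop.2 ⟨k, fun N hN => ?_⟩
      have hkN : k ≤ N + 1 := by omega
      rw [hidω k N hkN]
      calc (‖(∑ j ∈ Finset.Ico k (N+1), uu p T (γ0+1+1) x j ω)
              + uu p T (γ0+1) x (N+1) ω‖₊ : ℝ≥0∞)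
          ≤ (‖∑ j ∈ Finset.Ico k (N+1), uu p T (γ0+1+1) x j ω‖₊ : ℝ≥0∞)
            + (‖uu p T (γ0+1) x (N+1) ω‖₊ : ℝ≥0∞) := by
            exact_mod_cast nnnorm_add_le _ _
        _ ≤ (∑ j ∈ Finset.Ico k (N+1), (‖uu p T (γ0+1+1) x j ω‖₊ : ℝ≥0∞))
            + (‖uu p T (γ0+1) x (N+1) ω‖₊ : ℝ≥0∞) := by
            refine add_le_add_left ?_ _
            calc ((‖∑ j ∈ Finset.Ico k (N+1), uu p T (γ0+1+1) x j ω‖₊ : ℝ≥0) : ℝ≥0∞)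
                ≤ ((∑ j ∈ Finset.Ico k (N+1), ‖uu p T (γ0+1+1) x j ω‖₊ : ℝ≥0) : ℝ≥0∞) :=
                  ENNReal.coe_le_coe.2 (nnnorm_sum_le _ _)
              _ = ∑ j ∈ Finset.Ico k (N+1), (‖uu p T (γ0+1+1) x j ω‖₊ : ℝ≥0∞) :=
                  ENNReal.coe_finset_sum _ _
        _ ≤ (∑' i : ℕ, n (k+i)) + (‖uu p T (γ0+1) x (N+1) ω‖₊ : ℝ≥0∞) := by
            refine add_le_add_left ?_ _
            rw [Finset.sum_Ico_eq_sum_range]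
            exact ENNReal.sum_le_tsum (Finset.range (N+1-k))
    -- step 2: Cauchy-Schwarz
    have hcs : ∀ k : ℕ, (∑' i : ℕ, n (k+i))^2
        ≤ ENNReal.ofReal (((k:ℝ)+1)⁻¹) * ∑' i : ℕ, w (k+i) * (n (k+i))^2 := by
      intro k
      have h1 : ∀ i : ℕ, n (k+i)
          = (w (k+i)) ^ (-(2:ℝ)⁻¹) * ((w (k+i)) ^ ((2:ℝ)⁻¹) * n (k+i)) := by
        intro i
        rw [← mul_assoc, ← ENNReal.rpow_add _ _ (hw0 (k+i)) (hwt (k+i))]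
        norm_num
      have hf2 : ∀ i : ℕ, ((w (k+i)) ^ (-(2:ℝ)⁻¹))^2 = (w (k+i))⁻¹ := by
        intro i
        rw [← ENNReal.rpow_natCast ((w (k+i)) ^ (-(2:ℝ)⁻¹)) 2, ← ENNReal.rpow_mul]
        norm_num [ENNReal.rpow_neg_one]
      have hg2 : ∀ i : ℕ, ((w (k+i)) ^ ((2:ℝ)⁻¹) * n (k+i))^2 = w (k+i) * (n (k+i))^2 := by
        intro i
        rw [mul_pow, ← ENNReal.rpow_natCast ((w (k+i)) ^ ((2:ℝ)⁻¹)) 2, ← ENNReal.rpow_mul]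
        norm_num
      calc (∑' i : ℕ, n (k+i))^2
          = (∑' i : ℕ, (w (k+i)) ^ (-(2:ℝ)⁻¹) * ((w (k+i)) ^ ((2:ℝ)⁻¹) * n (k+i)))^2 :=
            congrArg (fun t => t^2) (tsum_congr h1)
        _ ≤ (∑' i : ℕ, ((w (k+i)) ^ (-(2:ℝ)⁻¹))^2) *
              (∑' i : ℕ, ((w (k+i)) ^ ((2:ℝ)⁻¹) * n (k+i))^2) := cs _ _
        _ = (∑' i : ℕ, (w (k+i))⁻¹) * (∑' i : ℕ, w (k+i) * (n (k+i))^2) := by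
            rw [tsum_congr hf2, tsum_congr hg2]
        _ ≤ ENNReal.ofReal (((k:ℝ)+1)⁻¹) * ∑' i : ℕ, w (k+i) * (n (k+i))^2 :=
            mul_le_mul_left (htail k) _
    -- step 3: summation and swapping
    set A' : ℕ → ℝ≥0∞ := fun k => ENNReal.ofReal (((k:ℝ)+1) ^ (2*(((γ0+1):ℕ):ℝ)-2)) with hA'def
    set H : ℕ → ℝ≥0∞ := fun j => w j * (n j)^2 with hHdef
    have hA' : ∀ k : ℕ, ENNReal.ofReal (((k:ℝ)+1) ^ (2*(((γ0+1):ℕ):ℝ)-1)) *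
        ENNReal.ofReal (((k:ℝ)+1)⁻¹) ≤ A' k := by
      intro k
      refine le_of_eq ?_
      simp only [hA'def]
      rw [← ENNReal.ofReal_mul (by positivity)]
      congr 1
      rw [← Real.rpow_neg_one ((k:ℝ)+1), ← Real.rpow_add (by positivity)]
      congr 1
      ring
    have hexp0 : (0:ℝ) ≤ 2*(((γ0+1):ℕ):ℝ)-2 := by
      push_cast
      linarith [Nat.cast_nonneg (α := ℝ) γ0]
    have hcoef : ∀ j : ℕ, (∑ k ∈ Finset.range (j+1), A' k) * H j
        ≤ 2 * (ENNReal.ofReal (((j:ℝ)+1) ^ (2*(((γ0+1+1):ℕ):ℝ)-1)) * (n j)^2) := by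
      intro j
      have hAsum : ∑ k ∈ Finset.range (j+1), A' k
          ≤ ENNReal.ofReal (((j:ℝ)+1) ^ (2*(((γ0+1):ℕ):ℝ)-1)) := by
        refine le_trans (Finset.sum_le_card_nsmul _ _
          (ENNReal.ofReal (((j:ℝ)+1) ^ (2*(((γ0+1):ℕ):ℝ)-2))) fun k hk => ?_) ?_
        · simp only [hA'def]
          refine ENNReal.ofReal_le_ofReal ?_
          refine Real.rpow_le_rpow (by positivity) ?_ hexp0
          simp only [Finset.mem_range, Nat.lt_succ_iff] at hk
          have := Nat.cast_le (α := ℝ).mpr hk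
          linarith
        · rw [Finset.card_range, nsmul_eq_mul]
          rw [show ((j+1 : ℕ) : ℝ≥0∞) = ENNReal.ofReal ((j+1 : ℕ) : ℝ) from
            (ENNReal.ofReal_natCast _).symm, ← ENNReal.ofReal_mul (by positivity)]
          refine ENNReal.ofReal_le_ofReal (le_of_eq ?_)
          rw [show ((j+1 : ℕ) : ℝ) = (j:ℝ)+1 by push_cast; ring]
          rw [show ((j:ℝ)+1) * ((j:ℝ)+1) ^ (2*(((γ0+1):ℕ):ℝ)-2)
              = ((j:ℝ)+1) ^ (1:ℝ) * ((j:ℝ)+1) ^ (2*(((γ0+1):ℕ):ℝ)-2) by rw [Real.rpow_one],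
            ← Real.rpow_add (by positivity)]
          congr 1
          push_cast
          ring
      have hwle : w j ≤ 2 * ENNReal.ofReal (((j:ℝ)+1) ^ (2:ℝ)) := by
        simp only [hwdef]
        rw [show (2:ℝ≥0∞) = ENNReal.ofReal 2 from (ENNReal.ofReal_ofNat 2).symm,
          ← ENNReal.ofReal_mul (by norm_num)]
        refine ENNReal.ofReal_le_ofReal ?_
        have h2 : ((j:ℝ)+1) ^ (2:ℝ) = ((j:ℝ)+1) ^ (2:ℕ) := by
          rw [← Real.rpow_natCast ((j:ℝ)+1) 2]
          norm_num
        rw [h2]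
        nlinarith [Nat.cast_nonneg (α := ℝ) j]
      calc (∑ k ∈ Finset.range (j+1), A' k) * H j
          = ((∑ k ∈ Finset.range (j+1), A' k) * w j) * (n j)^2 := by
            simp only [hHdef]; ring
        _ ≤ (ENNReal.ofReal (((j:ℝ)+1) ^ (2*(((γ0+1):ℕ):ℝ)-1)) *
              (2 * ENNReal.ofReal (((j:ℝ)+1) ^ (2:ℝ)))) * (n j)^2 :=
            mul_le_mul_left (mul_le_mul' hAsum hwle) _
        _ = 2 * (ENNReal.ofReal (((j:ℝ)+1) ^ (2*(((γ0+1):ℕ):ℝ)-1)) *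
              ENNReal.ofReal (((j:ℝ)+1) ^ (2:ℝ))) * (n j)^2 := by ring
        _ = 2 * (ENNReal.ofReal (((j:ℝ)+1) ^ (2*(((γ0+1+1):ℕ):ℝ)-1)) * (n j)^2) := by
            have hE : 2*(((γ0+1):ℕ):ℝ)-1 + 2 = 2*(((γ0+1+1):ℕ):ℝ)-1 := by push_cast; ring
            rw [← ENNReal.ofReal_mul (by positivity), ← Real.rpow_add (by positivity), hE,
              mul_assoc]
    -- assemble the pointwise bound
    calc ∑' k : ℕ, ENNReal.ofReal (((k:ℝ)+1) ^ (2*(((γ0+1):ℕ):ℝ)-1)) *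
            (‖uu p T (γ0+1) x k ω‖₊ : ℝ≥0∞)^2
        ≤ ∑' k : ℕ, ENNReal.ofReal (((k:ℝ)+1) ^ (2*(((γ0+1):ℕ):ℝ)-1)) *
            ((∑' i : ℕ, n (k+i)))^2 :=
          ENNReal.tsum_le_tsum fun k => mul_le_mul_right (pow_le_pow_left' (hk k) 2) _
      _ ≤ ∑' k : ℕ, ENNReal.ofReal (((k:ℝ)+1) ^ (2*(((γ0+1):ℕ):ℝ)-1)) *
            (ENNReal.ofReal (((k:ℝ)+1)⁻¹) * ∑' i : ℕ, w (k+i) * (n (k+i))^2) :=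
          ENNReal.tsum_le_tsum fun k => mul_le_mul_right (hcs k) _
      _ = ∑' k : ℕ, (ENNReal.ofReal (((k:ℝ)+1) ^ (2*(((γ0+1):ℕ):ℝ)-1)) *
            ENNReal.ofReal (((k:ℝ)+1)⁻¹)) * ∑' i : ℕ, H (k+i) := by
          refine tsum_congr fun k => ?_
          rw [mul_assoc]
      _ ≤ ∑' k : ℕ, A' k * ∑' i : ℕ, H (k+i) :=
          ENNReal.tsum_le_tsum fun k => mul_le_mul_left (hA' k) _
      _ ≤ ∑' j : ℕ, (∑ k ∈ Finset.range (j+1), A' k) * H j := swap A' H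
      _ ≤ ∑' j : ℕ, 2 * (ENNReal.ofReal (((j:ℝ)+1) ^ (2*(((γ0+1+1):ℕ):ℝ)-1)) * (n j)^2) :=
          ENNReal.tsum_le_tsum fun j => hcoef j
      _ = 2 * ∑' j : ℕ, ENNReal.ofReal (((j:ℝ)+1) ^ (2*(((γ0+1+1):ℕ):ℝ)-1)) * (n j)^2 :=
          ENNReal.tsum_mul_left
  -- conclude via the transfer lemma
  rw [sqNorm_uu p T (γ0+1) x, sqNorm_uu p T (γ0+1+1) x]
  have htr := transfer p hp (K := 2) (by norm_num) hmain
  refine le_trans htr (mul_le_mul_left ?_ _)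
  calc (2:ℝ≥0∞)^(1/2:ℝ) ≤ (2:ℝ≥0∞)^(1:ℝ) :=
        ENNReal.rpow_le_rpow_of_exponent_le (by norm_num) (by norm_num)
    _ = 2 := ENNReal.rpow_one 2
    _ = ENNReal.ofReal 2 := (ENNReal.ofReal_ofNat 2).symm


def EqvS (T : Lp ℂ (ENNReal.ofReal p) μ →L[ℂ] Lp ℂ (ENNReal.ofReal p) μ) (a b : ℕ) : Prop :=
  ∃ c C : ℝ, 0 < c ∧ c ≤ C ∧ ∀ x : Lp ℂ (ENNReal.ofReal p) μ,
    ENNReal.ofReal c * sqNorm p T b x ≤ sqNorm p T a x ∧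
    sqNorm p T a x ≤ ENNReal.ofReal C * sqNorm p T b x

lemma eqv_of_bounds {T : Lp ℂ (ENNReal.ofReal p) μ →L[ℂ] Lp ℂ (ENNReal.ofReal p) μ}
    {a b : ℕ} {C1 C2 : ℝ} (h1pos : 0 < C1) (h2pos : 0 < C2)
    (h1 : ∀ x, sqNorm p T a x ≤ ENNReal.ofReal C1 * sqNorm p T b x)
    (h2 : ∀ x, sqNorm p T b x ≤ ENNReal.ofReal C2 * sqNorm p T a x) :
    EqvS p T a b := by
  refine ⟨min C2⁻¹ (max C1 1), max C1 1,
    lt_min (by positivity) (by positivity), min_le_right _ _, fun x => ⟨?_, ?_⟩⟩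
  · calc ENNReal.ofReal (min C2⁻¹ (max C1 1)) * sqNorm p T b x
        ≤ ENNReal.ofReal C2⁻¹ * sqNorm p T b x :=
          mul_le_mul_left (ENNReal.ofReal_le_ofReal (min_le_left _ _)) _
      _ ≤ ENNReal.ofReal C2⁻¹ * (ENNReal.ofReal C2 * sqNorm p T a x) :=
          mul_le_mul_right (h2 x) _
      _ = sqNorm p T a x := by
          rw [← mul_assoc, ← ENNReal.ofReal_mul (by positivity),
            inv_mul_cancel₀ h2pos.ne', ENNReal.ofReal_one, one_mul]
  · exact le_trans (h1 x) (mul_le_mul_left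
      (ENNReal.ofReal_le_ofReal (le_max_left _ _)) _)

lemma eqv_ub {T : Lp ℂ (ENNReal.ofReal p) μ →L[ℂ] Lp ℂ (ENNReal.ofReal p) μ}
    {a b : ℕ} (h : EqvS p T a b) :
    (∃ D > (0:ℝ), ∀ x, sqNorm p T a x ≤ ENNReal.ofReal D * sqNorm p T b x) ∧
    (∃ D > (0:ℝ), ∀ x, sqNorm p T b x ≤ ENNReal.ofReal D * sqNorm p T a x) := by
  obtain ⟨c, C, hc, hcC, h⟩ := h
  refine ⟨⟨C, lt_of_lt_of_le hc hcC, fun x => (h x).2⟩, ⟨c⁻¹, by positivity, fun x => ?_⟩⟩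
  calc sqNorm p T b x
      = ENNReal.ofReal c⁻¹ * (ENNReal.ofReal c * sqNorm p T b x) := by
        rw [← mul_assoc, ← ENNReal.ofReal_mul (by positivity),
          inv_mul_cancel₀ hc.ne', ENNReal.ofReal_one, one_mul]
    _ ≤ ENNReal.ofReal c⁻¹ * sqNorm p T a x := mul_le_mul_right (h x).1 _

lemma ub_comp {T : Lp ℂ (ENNReal.ofReal p) μ →L[ℂ] Lp ℂ (ENNReal.ofReal p) μ}
    {a b c' : ℕ} {D E : ℝ} (hD : 0 ≤ D)
    (h1 : ∀ x, sqNorm p T a x ≤ ENNReal.ofReal D * sqNorm p T b x)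
    (h2 : ∀ x, sqNorm p T b x ≤ ENNReal.ofReal E * sqNorm p T c' x) :
    ∀ x, sqNorm p T a x ≤ ENNReal.ofReal (D * E) * sqNorm p T c' x := by
  intro x
  refine le_trans (h1 x) ?_
  rw [ENNReal.ofReal_mul hD, mul_assoc]
  exact mul_le_mul_right (h2 x) _

lemma eqv_symm {T : Lp ℂ (ENNReal.ofReal p) μ →L[ℂ] Lp ℂ (ENNReal.ofReal p) μ}
    {a b : ℕ} (h : EqvS p T a b) : EqvS p T b a := by
  obtain ⟨⟨D1, hD1, h1⟩, ⟨D2, hD2, h2⟩⟩ := eqv_ub p h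
  exact eqv_of_bounds p hD2 hD1 h2 h1

lemma eqv_trans {T : Lp ℂ (ENNReal.ofReal p) μ →L[ℂ] Lp ℂ (ENNReal.ofReal p) μ}
    {a b c' : ℕ} (hab : EqvS p T a b) (hbc : EqvS p T b c') : EqvS p T a c' := by
  obtain ⟨⟨D1, hD1, h1⟩, ⟨D2, hD2, h2⟩⟩ := eqv_ub p hab
  obtain ⟨⟨E1, hE1, h3⟩, ⟨E2, hE2, h4⟩⟩ := eqv_ub p hbc
  exact eqv_of_bounds p (by positivity) (by positivity)
    (ub_comp p hD1.le h1 h3) (ub_comp p hE2.le h4 h2)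

lemma eqv_step (hp : 1 < p) {T : Lp ℂ (ENNReal.ofReal p) μ →L[ℂ] Lp ℂ (ENNReal.ofReal p) μ}
    (hT : RRitt p T) (a : ℕ) (ha : 1 ≤ a) : EqvS p T a (a+1) := by
  obtain ⟨CA, hCA, hA⟩ := stepA p hp T hT a
  exact eqv_of_bounds p (by norm_num : (0:ℝ) < 2) hCA (stepB p hp T hT a ha) hA

lemma eqv_chain (hp : 1 < p) {T : Lp ℂ (ENNReal.ofReal p) μ →L[ℂ] Lp ℂ (ENNReal.ofReal p) μ}
    (hT : RRitt p T) (a : ℕ) (ha : 1 ≤ a) : ∀ n : ℕ, EqvS p T a (a+n) := by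
  intro n
  induction n with
  | zero =>
      refine eqv_of_bounds p one_pos one_pos (fun x => ?_) (fun x => ?_) <;>
        simp [ENNReal.ofReal_one, one_mul]
  | succ n ih =>
      have h2 := eqv_step p hp hT (a+n) (by omega)
      rw [show a + (n+1) = (a+n)+1 by omega]
      exact eqv_trans p ih h2

lemma eqv_main (hp : 1 < p) {T : Lp ℂ (ENNReal.ofReal p) μ →L[ℂ] Lp ℂ (ENNReal.ofReal p) μ}
    (hT : RRitt p T) (a b : ℕ) (ha : 1 ≤ a) (hb : 1 ≤ b) : EqvS p T a b := by
  rcases le_total a b with h | h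
  · have := eqv_chain p hp hT a ha (b - a)
    rwa [show a + (b - a) = b by omega] at this
  · have := eqv_chain p hp hT b hb (a - b)
    rw [show b + (a - b) = a by omega] at this
    exact eqv_symm p this

end main

end Stmt7Aux

/-- if `T` is an R-Ritt operator on `L^p(Ω)`, `1 < p < ∞`, then for all positive
integers `α, β` the square functions `‖·‖_{T,α}` and `‖·‖_{T,β}` are equivalent. -/
theorem stmt_7 (μ : Measure Ω) (p : ℝ) (hp : 1 < p) :
    letI : Fact (1 ≤ ENNReal.ofReal p) :=
      ⟨by rw [← ENNReal.ofReal_one]; exact ENNReal.ofReal_le_ofReal hp.le⟩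
    ∀ T : Lp ℂ (ENNReal.ofReal p) μ →L[ℂ] Lp ℂ (ENNReal.ofReal p) μ,
      RRitt p T → ∀ α β : ℕ, 1 ≤ α → 1 ≤ β →
        ∃ c C : ℝ, 0 < c ∧ c ≤ C ∧
          ∀ x : Lp ℂ (ENNReal.ofReal p) μ,
            ENNReal.ofReal c * sqNorm p T β x ≤ sqNorm p T α x ∧
            sqNorm p T α x ≤ ENNReal.ofReal C * sqNorm p T β x := by
  letI : Fact (1 ≤ ENNReal.ofReal p) :=
    ⟨by rw [← ENNReal.ofReal_one]; exact ENNReal.ofReal_le_ofReal hp.le⟩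
  intro T hT α β hα hβ
  exact Stmt7Aux.eqv_main p hp hT α β hα hβ
end
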